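/- arXiv:2107.02062 — 12 statements merged into one kernel-verified Lean document; each statement's English description precedes it below -/
import Mathlib

section
/- Let d ≤ n be natural numbers. For all integers i and l with 0 ≤ i ≤ n and 0 ≤ l ≤ n − d, one has (−1)^l · C(d, i−l) = (d! / (i! · (n−i)!)) · ∏_{j=0}^{l−1} (j − i) · ∏_{j=d+l+1}^{n} (j − i), as an identity of rational numbers. -/
/-- The binomial coefficient `C(d, m)` for an integer `m`, with the convention that it
vanishes for `m < 0` (and automatically for `m > d`). -/
def chooseQ (d : ℕ) (m : ℤ) : ℚ :=
  if 0 ≤ m then (d.choose m.toNat : ℚ) else 0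

/-! Both products are descending factorials up to sign:
`∏_{j<l} (j - i) = (-1)^l · i(i-1)⋯(i-l+1)` and `∏_{j=d+l+1}^{n} (j - i) = (n-i)(n-i-1)⋯(d+l+1-i)`.
They vanish exactly when `C(d, i-l)` does; otherwise `i! = (i-l)! · i(i-1)⋯(i-l+1)` and
`(n-i)! = (d+l-i)! · (n-i)⋯(d+l+1-i)` reduce the identity to `C(d, k) · k! · (d-k)! = d!`. -/

open Finset Nat

theorem prod_range_natCast_sub_natCast {R : Type*} [CommRing R] (i l : ℕ) :
    ∏ j ∈ range l, ((j : R) - i) = (-1) ^ l * (i.descFactorial l : R) := by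
  calc ∏ j ∈ range l, ((j : R) - i) = ∏ j ∈ range l, -((i : R) - j) := by simp only [neg_sub]
    _ = (-1) ^ l * ∏ j ∈ range l, ((i : R) - j) := by rw [prod_neg, card_range]
    _ = (-1) ^ l * (i.descFactorial l : R) := by
      rw [← descPochhammer_eval_eq_prod_range, descPochhammer_eval_eq_descFactorial]

theorem prod_Icc_natCast_sub_natCast {R : Type*} [CommRing R] {a n i : ℕ} (han : a ≤ n)
    (hin : i ≤ n) :
    ∏ j ∈ Icc (a + 1) n, ((j : R) - i) = ((n - i).descFactorial (n - a) : R) := by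
  induction n, han using Nat.le_induction generalizing i with
  | base => simp
  | succ n han ih =>
    rw [prod_Icc_succ_top (by omega)]
    rcases hin.lt_or_eq with hin | rfl
    · rw [ih (by omega), show n + 1 - i = n - i + 1 by omega, show n + 1 - a = n - a + 1 by omega,
        succ_descFactorial_succ]
      push_cast [Nat.cast_sub (by omega : i ≤ n)]
      ring
    · rw [sub_self, mul_zero, descFactorial_eq_zero_iff_lt.mpr (by omega), cast_zero]

theorem choose_sub_mul_factorial_mul_factorial {d i l n : ℕ} (hli : l ≤ i) (hid : i ≤ d + l)
    (hdn : d + l ≤ n) :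
    d.choose (i - l) * (i ! * (n - i)!) =
      d ! * i.descFactorial l * (n - i).descFactorial (n - (d + l)) := by
  have hi := factorial_mul_descFactorial hli
  have hn := factorial_mul_descFactorial (show n - (d + l) ≤ n - i by omega)
  rw [show n - i - (n - (d + l)) = d - (i - l) by omega] at hn
  rw [← hi, ← hn, ← choose_mul_factorial_mul_factorial (show i - l ≤ d by omega)]
  ring

theorem chooseQ_natCast_sub_natCast_of_lt {d i l : ℕ} (h : i < l) :
    chooseQ d ((i : ℤ) - l) = 0 :=
  if_neg (by omega)

theorem chooseQ_natCast_sub_natCast_of_le {d i l : ℕ} (h : l ≤ i) :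
    chooseQ d ((i : ℤ) - l) = d.choose (i - l) := by
  rw [chooseQ, if_pos (by omega), show ((i : ℤ) - l).toNat = i - l by omega]

theorem chooseQ_mul_factorial_mul_factorial {d i l n : ℕ} (hdn : d + l ≤ n) (hi : i ≤ n) :
    chooseQ d ((i : ℤ) - l) * (i ! * (n - i)! : ℚ) =
      d ! * i.descFactorial l * (n - i).descFactorial (n - (d + l)) := by
  rcases lt_or_ge i l with hil | hli
  · rw [chooseQ_natCast_sub_natCast_of_lt hil, descFactorial_eq_zero_iff_lt.mpr hil]
    simp
  rw [chooseQ_natCast_sub_natCast_of_le hli]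
  rcases lt_or_ge (d + l) i with hid | hid
  · rw [choose_eq_zero_of_lt (by omega),
      (n - i).descFactorial_eq_zero_iff_lt.mpr (by omega)]
    simp
  exact_mod_cast choose_sub_mul_factorial_mul_factorial hli hid hdn

/-- For natural numbers `d ≤ n` and all integers `i`, `l` with `0 ≤ i ≤ n` and
`0 ≤ l ≤ n − d`, one has
`(−1)^l · C(d, i−l) = (d! / (i!·(n−i)!)) · ∏_{j=0}^{l−1} (j−i) · ∏_{j=d+l+1}^{n} (j−i)`
as rational numbers. -/
theorem stmt0 (d n : ℕ) (hdn : d ≤ n) (i l : ℕ) (hi : i ≤ n) (hl : l ≤ n - d) :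
    (-1 : ℚ) ^ l * chooseQ d ((i : ℤ) - (l : ℤ)) =
      (d.factorial : ℚ) / ((i.factorial : ℚ) * ((n - i).factorial : ℚ)) *
        (∏ j ∈ Finset.range l, ((j : ℚ) - (i : ℚ))) *
        ∏ j ∈ Finset.Icc (d + l + 1) n, ((j : ℚ) - (i : ℚ)) := by
  have hdl : d + l ≤ n := by omega
  have key := chooseQ_mul_factorial_mul_factorial hdl hi
  rw [prod_range_natCast_sub_natCast, prod_Icc_natCast_sub_natCast hdl hi]
  field_simp
  linear_combination key
end

section
/- The polynomial P(t) = ∏_{p=1}^{r} (1 − t^p)^{n_p} has at least d + 1 nonzero coefficients, where d = n₁ + ⋯ + n_r. -/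
open Polynomial Finset

/-- `d = n₁ + ⋯ + n_r`. -/
def dTot (r : ℕ) (np : ℕ → ℕ) : ℕ := ∑ p ∈ Finset.Icc 1 r, np p

/-- `P(t) = ∏_{p=1}^{r} (1 − t^p)^{n_p}`. -/
noncomputable def Ppoly (r : ℕ) (np : ℕ → ℕ) : Polynomial ℚ :=
  ∏ p ∈ Finset.Icc 1 r, (1 - X ^ p) ^ np p

/-!
`P` is divisible by `(t - 1)^d`, and a nonzero polynomial over a domain of characteristic zero
divisible by `(t - a)^d` with `a ≠ 0` has at least `d + 1` nonzero coefficients. For the latter,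
apply the operator `f ↦ t f' - m f` with `m = deg f`: it multiplies the coefficient of `t^n` by
`n - m`, so it removes exactly one monomial, and it lowers the multiplicity of the root `a` by at
most one. The result is nonzero unless `f` is a monomial, which cannot vanish at `a ≠ 0`; so
induction on `d` applies.
-/

namespace Polynomial

variable {R : Type*} [CommRing R]

theorem coeff_X_mul_derivative_sub_C_mul (f : R[X]) (m n : ℕ) :
    (X * derivative f - C (m : R) * f).coeff n = ((n : R) - m) * f.coeff n := by
  cases n with
  | zero => simp
  | succ n => simp [coeff_derivative]; ring

variable [IsDomain R] [CharZero R]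

theorem support_X_mul_derivative_sub_C_mul (f : R[X]) (m : ℕ) :
    (X * derivative f - C (m : R) * f).support = f.support.erase m := by
  ext n
  rw [mem_support_iff, coeff_X_mul_derivative_sub_C_mul, mem_erase, mem_support_iff,
    mul_ne_zero_iff, sub_ne_zero, Ne, Nat.cast_inj]

theorem add_one_le_card_support_of_X_sub_C_pow_dvd {a : R} (ha : a ≠ 0) :
    ∀ (d : ℕ) {f : R[X]}, f ≠ 0 → (X - C a) ^ d ∣ f → d + 1 ≤ f.support.card
  | 0, f, hf, _ => by simpa using card_pos.mpr (nonempty_support_iff.mpr hf)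
  | d + 1, f, hf, hdvd => by
    set m := f.natDegree
    set g := X * derivative f - C (m : R) * f
    have hm : m ∈ f.support := natDegree_mem_support_of_nonzero hf
    have hcard : g.support.card + 1 = f.support.card := by
      rw [support_X_mul_derivative_sub_C_mul, card_erase_add_one hm]
    have hg : g ≠ 0 := by
      intro hg0
      obtain ⟨k, c, hc, rfl⟩ :=
        card_support_eq_one.mp (by rw [← hcard, hg0, support_zero]; rfl)
      have hroot : (X - C a) ∣ C c * X ^ k := (dvd_pow_self _ d.succ_ne_zero).trans hdvd
      rw [dvd_iff_isRoot, IsRoot, eval_mul, eval_C, eval_pow, eval_X] at hroot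
      exact mul_ne_zero hc (pow_ne_zero k ha) hroot
    have hdvd_g : (X - C a) ^ d ∣ g :=
      dvd_sub (dvd_mul_of_dvd_right (pow_sub_one_dvd_derivative_of_pow_dvd hdvd) _)
        (dvd_mul_of_dvd_right ((pow_dvd_pow _ d.le_succ).trans hdvd) _)
    have := add_one_le_card_support_of_X_sub_C_pow_dvd ha d hg hdvd_g
    omega

end Polynomial

theorem X_sub_C_one_pow_dTot_dvd_Ppoly (r : ℕ) (np : ℕ → ℕ) :
    (X - C 1) ^ dTot r np ∣ Ppoly r np := by
  rw [dTot, Ppoly, ← prod_pow_eq_pow_sum]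
  refine prod_dvd_prod_of_dvd _ _ fun p _ ↦ pow_dvd_pow_of_dvd ?_ _
  simpa using (sub_dvd_pow_sub_pow (X : ℚ[X]) 1 p).neg_right

theorem Ppoly_ne_zero (r : ℕ) (np : ℕ → ℕ) : Ppoly r np ≠ 0 := by
  refine prod_ne_zero_iff.mpr fun p hp ↦ pow_ne_zero _ fun h ↦ ?_
  have : (1 - X ^ p : ℚ[X]).eval 0 = 1 := by
    simp [zero_pow (Nat.one_le_iff_ne_zero.mp (mem_Icc.mp hp).1)]
  simp [h] at this

theorem stmt2_general (r : ℕ) (np : ℕ → ℕ) :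
    dTot r np + 1 ≤ (Ppoly r np).support.card :=
  add_one_le_card_support_of_X_sub_C_pow_dvd one_ne_zero _ (Ppoly_ne_zero r np)
    (X_sub_C_one_pow_dTot_dvd_Ppoly r np)

/-- The polynomial `P(t) = ∏_{p=1}^{r} (1 − t^p)^{n_p}` has at least `d + 1` nonzero
coefficients, where `d = n₁ + ⋯ + n_r`. -/
theorem stmt2 (r : ℕ) (hr : 1 ≤ r) (np : ℕ → ℕ) :
    dTot r np + 1 ≤ (Ppoly r np).support.card :=
  stmt2_general r np
end

section
/- Suppose the polynomial P(t) has exactly d + 1 nonzero coefficients. Let 𝒫′ ⊆ {0, 1, …, n} denote the set of exponents i for which the coefficient of t^i in P vanishes. Then 𝒫′ has exactly n − d elements, and c(i) = 2^{n₂} · 3^{n₃} ⋯ r^{n_r} · ∏_{j ∈ 𝒫′} (j − i) as polynomials in the variable i. In particular, c has n − d mutually different integral zeros located in {0, …, n}. -/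
open Polynomial Finset

/-- `n = 1·n₁ + 2·n₂ + ⋯ + r·n_r`, the homogeneous dimension. -/
def nHom (r : ℕ) (np : ℕ → ℕ) : ℕ := ∑ p ∈ Finset.Icc 1 r, p * np p

/-- `∏_{p=2}^{r} (1 + t + ⋯ + t^{p−1})^{n_p}`, whose coefficients are the `a_l`. -/
noncomputable def Apoly (r : ℕ) (np : ℕ → ℕ) : Polynomial ℚ :=
  ∏ p ∈ Finset.Icc 2 r, (∑ j ∈ Finset.range p, X ^ j) ^ np p

/-- The coefficient `a_l`. -/
noncomputable def aCoeff (r : ℕ) (np : ℕ → ℕ) (l : ℕ) : ℚ := (Apoly r np).coeff l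

/-- `Q_l(i) = ∏_{j=0}^{l−1} (j − i) · ∏_{j=d+l+1}^{n} (j − i)`. -/
def Qval (r : ℕ) (np : ℕ → ℕ) (l : ℕ) (i : ℚ) : ℚ :=
  (∏ j ∈ Finset.range l, ((j : ℚ) - i)) *
    ∏ j ∈ Finset.Icc (dTot r np + l + 1) (nHom r np), ((j : ℚ) - i)

/-- `c(i) = ∑_{l=0}^{n−d} a_l · Q_l(i)`. -/
noncomputable def cVal (r : ℕ) (np : ℕ → ℕ) (i : ℚ) : ℚ :=
  ∑ l ∈ Finset.range (nHom r np - dTot r np + 1), aCoeff r np l * Qval r np l i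

/-!
Since `1 - t^p = (1 - t)(1 + ⋯ + t^{p-1})`, we have `P = (1 - t)^d · A` with `A = ∑ a_l t^l` of
degree at most `n - d`. Evaluating the factorials in `Q_l(j)` gives
`d! · Q_l(j) = (-1)^j j! (n-j)! · [t^{j-l}] (1 - t)^d` for `l ≤ j ≤ n`, hence
`d! · c(j) = (-1)^j j! (n-j)! · [t^j] P`, so `c` vanishes on `𝒫′`, which has `(n+1) - (d+1)`
elements. Since `c` has degree at most `n - d` and `i^{n-d}`-coefficient `(-1)^{n-d} A(1)`,
with `A(1) = 2^{n₂} ⋯ r^{n_r}`, it is determined by these `n - d` zeros.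
-/

open scoped Nat

lemma factorial_mul_prod_range_natCast_sub {l j : ℕ} (h : l ≤ j) :
    ((j - l)! : ℚ) * ∏ m ∈ range l, ((j : ℚ) - m) = j ! := by
  induction l with
  | zero => simp
  | succ l ih =>
    rw [prod_range_succ, ← ih (by omega), show j - l = (j - (l + 1)) + 1 by omega,
      Nat.factorial_succ]
    push_cast [Nat.cast_sub h]
    ring

lemma factorial_mul_prod_Icc_natCast_sub {j u n : ℕ} (hju : j ≤ u) (hun : u ≤ n) :
    ((u - j)! : ℚ) * ∏ m ∈ Icc (u + 1) n, ((m : ℚ) - j) = (n - j)! := by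
  induction n, hun using Nat.le_induction with
  | base => simp
  | succ n hun ih =>
    rw [prod_Icc_succ_top (by omega), ← mul_assoc, ih, show n + 1 - j = (n - j) + 1 by omega,
      Nat.factorial_succ]
    push_cast [Nat.cast_sub (hju.trans hun)]
    ring

namespace Polynomial

variable {R : Type*} [CommRing R]

lemma coeff_one_sub_X_pow (d k : ℕ) :
    ((1 - X : R[X]) ^ d).coeff k = (-1) ^ k * d.choose k := by
  rw [sub_eq_add_neg, add_comm, add_pow, finsetSum_coeff]
  have (m : ℕ) : (-X : R[X]) ^ m * 1 ^ (d - m) * (d.choose m : R[X]) =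
      C ((-1) ^ m * d.choose m : R) * X ^ m := by
    rw [neg_pow, one_pow, mul_one, C_mul, C_pow, C_neg, C_1, ← C_eq_natCast]; ring
  simp_rw [this, coeff_C_mul_X_pow, sum_ite_eq, mem_range]
  split_ifs with h
  · rfl
  · rw [Nat.choose_eq_zero_of_lt (by omega)]; simp

lemma degree_sub_lt_of_coeff_eq {p q : R[X]} {k : ℕ} (hp : p.natDegree ≤ k)
    (hq : q.natDegree ≤ k) (hpq : p.coeff k = q.coeff k) : (p - q).degree < k := by
  rw [degree_lt_iff_coeff_zero]
  intro m hm
  rw [coeff_sub, sub_eq_zero]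
  rcases hm.eq_or_lt with rfl | hlt
  · exact hpq
  · rw [coeff_eq_zero_of_natDegree_lt (hp.trans_lt hlt),
      coeff_eq_zero_of_natDegree_lt (hq.trans_lt hlt)]

variable [IsDomain R] {ι : Type*}

lemma natDegree_prod_C_sub_X (s : Finset ι) (f : ι → R) :
    (∏ i ∈ s, (C (f i) - X)).natDegree = #s := by
  rw [natDegree_prod _ _ fun i _ => by rw [← neg_sub, neg_ne_zero]; exact X_sub_C_ne_zero _]
  simp_rw [← neg_sub X, natDegree_neg, natDegree_X_sub_C, sum_const, smul_eq_mul, mul_one]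

lemma leadingCoeff_prod_C_sub_X (s : Finset ι) (f : ι → R) :
    (∏ i ∈ s, (C (f i) - X)).leadingCoeff = (-1) ^ #s := by
  simp_rw [leadingCoeff_prod, ← neg_sub X, leadingCoeff_neg, leadingCoeff_X_sub_C, prod_const]

end Polynomial

section CPolynomial

variable (d n : ℕ)

/- `Qval` and `cVal` as polynomials in `i`, with `d`, `n` and the coefficient polynomial `A`
as free parameters. -/
noncomputable def qPoly (l : ℕ) : ℚ[X] :=
  (∏ j ∈ range l, (C (j : ℚ) - X)) * ∏ j ∈ Icc (d + l + 1) n, (C (j : ℚ) - X)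

noncomputable def cPoly (A : ℚ[X]) : ℚ[X] :=
  ∑ l ∈ range (n - d + 1), C (A.coeff l) * qPoly d n l

variable {d n}

lemma natDegree_qPoly {l : ℕ} (hl : l ≤ n - d) : (qPoly d n l).natDegree = n - d := by
  rw [qPoly, natDegree_mul', natDegree_prod_C_sub_X, natDegree_prod_C_sub_X, card_range,
    Nat.card_Icc]
  · omega
  · rw [leadingCoeff_prod_C_sub_X, leadingCoeff_prod_C_sub_X]
    simp

lemma leadingCoeff_qPoly {l : ℕ} (hl : l ≤ n - d) :
    (qPoly d n l).leadingCoeff = (-1) ^ (n - d) := by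
  rw [qPoly, leadingCoeff_mul, leadingCoeff_prod_C_sub_X, leadingCoeff_prod_C_sub_X, ← pow_add,
    card_range, Nat.card_Icc]
  congr 1
  omega

lemma eval_qPoly_of_lt {j l : ℕ} (h : j < l) : (qPoly d n l).eval (j : ℚ) = 0 := by
  rw [qPoly, eval_mul, eval_prod]
  exact mul_eq_zero_of_left (prod_eq_zero (mem_range.2 h) (by simp)) _

lemma eval_qPoly_of_add_lt {j l : ℕ} (h : d + l < j) (hj : j ≤ n) :
    (qPoly d n l).eval (j : ℚ) = 0 := by
  rw [qPoly, eval_mul, eval_prod (Icc _ _)]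
  exact mul_eq_zero_of_right _ (prod_eq_zero (mem_Icc.2 ⟨h, hj⟩) (by simp))

lemma factorial_mul_eval_qPoly {j l : ℕ} (hlj : l ≤ j) (hj : j ≤ n) (hl : d + l ≤ n) :
    (d ! : ℚ) * (qPoly d n l).eval (j : ℚ) =
      (-1) ^ j * j ! * (n - j)! * ((1 - X : ℚ[X]) ^ d).coeff (j - l) := by
  rw [coeff_one_sub_X_pow]
  rcases le_or_gt j (d + l) with hjd | hjd
  · have hchoose : (d.choose (j - l) * (j - l)! * (d + l - j)! : ℚ) = d ! := by
      rw [show d + l - j = d - (j - l) by omega]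
      exact_mod_cast Nat.choose_mul_factorial_mul_factorial (by omega)
    have hsign : (-1 : ℚ) ^ j * (-1) ^ (j - l) = (-1) ^ l := by
      rw [← pow_add, show j + (j - l) = l + 2 * (j - l) by omega, pow_add, pow_mul]
      norm_num
    have hrange :
        ∏ m ∈ range l, ((m : ℚ) - j) = (-1) ^ l * ∏ m ∈ range l, ((j : ℚ) - m) := by
      simp_rw [← neg_sub (j : ℚ), prod_neg, card_range]
    have h1 := factorial_mul_prod_range_natCast_sub hlj
    have h2 := factorial_mul_prod_Icc_natCast_sub hjd hl
    simp only [qPoly, eval_mul, eval_prod, eval_sub, eval_C, eval_X]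
    rw [hrange, ← hchoose]
    linear_combination d.choose (j - l) *
      ((-1) ^ l * (d + l - j)! * (∏ m ∈ Icc (d + l + 1) n, ((m : ℚ) - j)) * h1 +
        (-1) ^ l * j ! * h2 - j ! * (n - j)! * hsign)
  · rw [eval_qPoly_of_add_lt hjd hj, Nat.choose_eq_zero_of_lt (by omega)]
    simp

lemma natDegree_cPoly_le (A : ℚ[X]) : (cPoly d n A).natDegree ≤ n - d :=
  natDegree_sum_le_of_forall_le _ _ fun l hl =>
    (natDegree_C_mul_le _ _).trans (natDegree_qPoly (by simpa [Nat.lt_succ_iff] using hl)).le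

lemma coeff_cPoly {A : ℚ[X]} (hA : A.natDegree ≤ n - d) :
    (cPoly d n A).coeff (n - d) = (-1) ^ (n - d) * A.eval 1 := by
  rw [cPoly, finsetSum_coeff, eval_eq_sum_range' (Nat.lt_succ_of_le hA), mul_sum]
  refine sum_congr rfl fun l hl => ?_
  have hl : l ≤ n - d := by simpa [Nat.lt_succ_iff] using hl
  have hcoeff : (qPoly d n l).coeff (n - d) = (-1) ^ (n - d) := by
    rw [← leadingCoeff_qPoly hl, leadingCoeff, natDegree_qPoly hl]
  rw [coeff_C_mul, hcoeff, one_pow, mul_one, mul_comm]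

lemma factorial_mul_eval_cPoly {A : ℚ[X]} (hA : A.natDegree ≤ n - d) (hd : d ≤ n) {j : ℕ}
    (hj : j ≤ n) :
    (d ! : ℚ) * (cPoly d n A).eval (j : ℚ) =
      (-1) ^ j * j ! * (n - j)! * ((1 - X) ^ d * A).coeff j := by
  rw [mul_comm _ A, coeff_mul, Nat.sum_antidiagonal_eq_sum_range_succ_mk, mul_sum]
  calc (d ! : ℚ) * (cPoly d n A).eval (j : ℚ)
      = ∑ l ∈ range (n - d + 1), A.coeff l * (d ! * (qPoly d n l).eval (j : ℚ)) := by
        simp only [cPoly, eval_finsetSum, eval_mul, eval_C, mul_sum, mul_left_comm]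
    _ = ∑ l ∈ range (min (n - d) j + 1), A.coeff l * (d ! * (qPoly d n l).eval (j : ℚ)) := by
        refine (sum_subset (range_subset_range.2 (by omega)) fun l hl hlj => ?_).symm
        rw [mem_range] at hl hlj
        rw [eval_qPoly_of_lt (by omega), mul_zero, mul_zero]
    _ = ∑ l ∈ range (min (n - d) j + 1),
          A.coeff l * ((-1) ^ j * j ! * (n - j)! * ((1 - X : ℚ[X]) ^ d).coeff (j - l)) := by
        refine sum_congr rfl fun l hl => ?_
        rw [mem_range] at hl
        rw [factorial_mul_eval_qPoly (by omega) hj (by omega)]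
    _ = ∑ l ∈ range (j + 1),
          A.coeff l * ((-1) ^ j * j ! * (n - j)! * ((1 - X : ℚ[X]) ^ d).coeff (j - l)) := by
        refine sum_subset (range_subset_range.2 (by omega)) fun l hl hlj => ?_
        rw [mem_range] at hl hlj
        rw [coeff_eq_zero_of_natDegree_lt (by omega), zero_mul]
    _ = ∑ l ∈ range (j + 1),
          (-1) ^ j * j ! * (n - j)! * (A.coeff l * ((1 - X : ℚ[X]) ^ d).coeff (j - l)) :=
        sum_congr rfl fun l _ => by ring

lemma cPoly_eq_of_eval_eq_zero {A : ℚ[X]} (hA : A.natDegree ≤ n - d) {s : Finset ℕ}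
    (hs : #s = n - d) (hzero : ∀ j ∈ s, (cPoly d n A).eval (j : ℚ) = 0) :
    cPoly d n A = C (A.eval 1) * ∏ j ∈ s, (C (j : ℚ) - X) := by
  refine eq_of_degree_sub_lt_of_eval_index_eq s Nat.cast_injective.injOn ?_ fun j hj => ?_
  · have hprod : (∏ j ∈ s, (C (j : ℚ) - X)).coeff #s = (-1) ^ #s := by
      rw [← leadingCoeff_prod_C_sub_X s, leadingCoeff, natDegree_prod_C_sub_X]
    rw [hs]
    refine degree_sub_lt_of_coeff_eq (natDegree_cPoly_le A) ?_ ?_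
    · exact ((natDegree_C_mul_le _ _).trans (natDegree_prod_C_sub_X s _).le).trans hs.le
    · rw [coeff_cPoly hA, coeff_C_mul, ← hs, hprod, mul_comm]
  · rw [hzero j hj, eval_mul, eval_prod, prod_eq_zero hj (by simp), mul_zero]

end CPolynomial

lemma card_filter_coeff_eq_zero {R : Type*} [Semiring R] [DecidableEq R] {p : R[X]} {n : ℕ}
    (hp : p.natDegree ≤ n) :
    #((range (n + 1)).filter fun j => p.coeff j = 0) = n + 1 - #p.support := by
  have hsupp : p.support ⊆ range (n + 1) := fun k hk =>
    mem_range.2 (Nat.lt_succ_of_le ((le_natDegree_of_mem_supp k hk).trans hp))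
  have hfilter :
      (range (n + 1)).filter (fun j => p.coeff j = 0) = range (n + 1) \ p.support := by
    ext k
    simp
  rw [hfilter, card_sdiff_of_subset hsupp, card_range]

section Specialization

variable (r : ℕ) (np : ℕ → ℕ)

lemma dTot_le_nHom : dTot r np ≤ nHom r np :=
  sum_le_sum fun _ hp => Nat.le_mul_of_pos_left _ (mem_Icc.1 hp).1

lemma nHom_eq_dTot_add : nHom r np = dTot r np + ∑ p ∈ Icc 1 r, (p - 1) * np p := by
  rw [dTot, nHom, ← sum_add_distrib]
  refine sum_congr rfl fun p hp => ?_
  obtain ⟨q, rfl⟩ : ∃ q, p = q + 1 := ⟨p - 1, by have := (mem_Icc.1 hp).1; omega⟩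
  simp only [add_tsub_cancel_right]
  ring

lemma natDegree_Apoly_le : (Apoly r np).natDegree ≤ nHom r np - dTot r np := by
  have hgeom (p : ℕ) : (∑ i ∈ range p, (X : ℚ[X]) ^ i).natDegree ≤ p - 1 :=
    natDegree_sum_le_of_forall_le _ _ fun i hi =>
      (natDegree_X_pow_le i).trans (by rw [mem_range] at hi; omega)
  rw [nHom_eq_dTot_add, Nat.add_sub_cancel_left]
  refine (natDegree_prod_le _ _).trans ((sum_le_sum fun _ _ => ?_).trans
    (sum_le_sum_of_subset (Icc_subset_Icc_left one_le_two)))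
  rw [mul_comm]
  exact natDegree_pow_le_of_le _ (hgeom _)

lemma eval_one_Apoly : (Apoly r np).eval 1 = ∏ p ∈ Icc 2 r, (p : ℚ) ^ np p := by
  simp [Apoly, eval_prod, eval_geom_sum]

lemma Ppoly_eq_one_sub_X_pow_mul_Apoly : Ppoly r np = (1 - X) ^ dTot r np * Apoly r np := by
  have hApoly : Apoly r np = ∏ p ∈ Icc 1 r, (∑ i ∈ range p, (X : ℚ[X]) ^ i) ^ np p :=
    prod_subset (Icc_subset_Icc_left one_le_two) fun p hp hp2 => by
      rw [show p = 1 by simp at hp hp2; omega]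
      simp
  rw [Ppoly, hApoly, dTot, ← prod_pow_eq_pow_sum, ← prod_mul_distrib]
  exact prod_congr rfl fun p _ => by rw [← mul_pow, mul_neg_geom_sum]

lemma natDegree_Ppoly_le : (Ppoly r np).natDegree ≤ nHom r np := by
  have hlin : (1 - X : ℚ[X]).natDegree ≤ 1 := by compute_degree
  have hpow := natDegree_pow_le_of_le (dTot r np) hlin
  have hA := natDegree_Apoly_le r np
  have hdn := dTot_le_nHom r np
  rw [Ppoly_eq_one_sub_X_pow_mul_Apoly]
  exact natDegree_mul_le.trans (by omega)

lemma cVal_eq_eval_cPoly (i : ℚ) :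
    cVal r np i = (cPoly (dTot r np) (nHom r np) (Apoly r np)).eval i := by
  simp [cVal, cPoly, qPoly, Qval, aCoeff, eval_finsetSum, eval_prod]

lemma cVal_eq_zero_of_coeff_Ppoly_eq_zero {j : ℕ} (hj : j ≤ nHom r np)
    (hcoeff : (Ppoly r np).coeff j = 0) : cVal r np j = 0 := by
  have key := factorial_mul_eval_cPoly (natDegree_Apoly_le r np) (dTot_le_nHom r np) hj
  rw [← Ppoly_eq_one_sub_X_pow_mul_Apoly, hcoeff, mul_zero, ← cVal_eq_eval_cPoly] at key
  exact (mul_eq_zero.1 key).resolve_left (Nat.cast_ne_zero.2 (Nat.factorial_ne_zero _))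

end Specialization

theorem stmt3_general (r : ℕ) (np : ℕ → ℕ)
    (h : (Ppoly r np).support.card = dTot r np + 1) :
    ((Finset.range (nHom r np + 1)).filter fun j => (Ppoly r np).coeff j = 0).card =
        nHom r np - dTot r np ∧
      (∀ i : ℚ,
        cVal r np i =
          (∏ p ∈ Finset.Icc 2 r, (p : ℚ) ^ np p) *
            ∏ j ∈ (Finset.range (nHom r np + 1)).filter fun j => (Ppoly r np).coeff j = 0,
              ((j : ℚ) - i)) ∧
      ∀ j ∈ (Finset.range (nHom r np + 1)).filter fun j => (Ppoly r np).coeff j = 0,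
        cVal r np (j : ℚ) = 0 := by
  have hzero : ∀ j ∈ (range (nHom r np + 1)).filter fun j => (Ppoly r np).coeff j = 0,
      cVal r np j = 0 := fun j hj => by
    rw [mem_filter, mem_range] at hj
    exact cVal_eq_zero_of_coeff_Ppoly_eq_zero r np (Nat.lt_succ_iff.1 hj.1) hj.2
  have hcard : #((range (nHom r np + 1)).filter fun j => (Ppoly r np).coeff j = 0) =
      nHom r np - dTot r np := by
    rw [card_filter_coeff_eq_zero (natDegree_Ppoly_le r np), h, Nat.add_sub_add_right]
  refine ⟨hcard, fun i => ?_, hzero⟩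
  rw [cVal_eq_eval_cPoly, cPoly_eq_of_eval_eq_zero (natDegree_Apoly_le r np) hcard
    fun j hj => cVal_eq_eval_cPoly r np j ▸ hzero j hj, eval_one_Apoly]
  simp [eval_prod]

/-- If `P` has exactly `d+1` nonzero coefficients and `𝒫′ ⊆ {0,…,n}` is the set of
exponents whose coefficient in `P` vanishes, then `𝒫′` has `n − d` elements,
`c(i) = 2^{n₂}·3^{n₃}⋯r^{n_r} · ∏_{j ∈ 𝒫′} (j − i)` as polynomial functions of `i`,
and in particular the elements of `𝒫′` are `n − d` mutually different integral zeros of `c`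
located in `{0,…,n}`. -/
theorem stmt3 (r : ℕ) (hr : 1 ≤ r) (np : ℕ → ℕ)
    (h : (Ppoly r np).support.card = dTot r np + 1) :
    ((Finset.range (nHom r np + 1)).filter fun j => (Ppoly r np).coeff j = 0).card =
        nHom r np - dTot r np ∧
      (∀ i : ℚ,
        cVal r np i =
          (∏ p ∈ Finset.Icc 2 r, (p : ℚ) ^ np p) *
            ∏ j ∈ (Finset.range (nHom r np + 1)).filter fun j => (Ppoly r np).coeff j = 0,
              ((j : ℚ) - i)) ∧
      ∀ j ∈ (Finset.range (nHom r np + 1)).filter fun j => (Ppoly r np).coeff j = 0,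
        cVal r np (j : ℚ) = 0 :=
  stmt3_general r np h
end

section
/- Let n₁ be a natural number and put n = n₁ + 4. If the polynomial (1 − t)^{n₁} (1 − t²)² has exactly n₁ + 3 nonzero coefficients, then n is a perfect square. -/
/-!
Write `m = n₁ + 2`, so that the polynomial is `(1 - t)^m (1 + t)^2`. With only `n₁ + 3` nonzero
coefficients, one of the coefficients of `t^0, …, t^(n₁+3)` vanishes. The constant term is `1`
and the coefficient of `t` is `2 - m`, so either `m = 2` or the coefficient of `t^(j+2)` vanishes
for some `j ≤ m`. Up to sign that coefficient is the second difference
`C(m, j+2) - 2 C(m, j+1) + C(m, j)`, and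
`(j+1)(j+2) (C(m, j+2) - 2 C(m, j+1) + C(m, j)) = C(m, j) ((m - 2j - 2)^2 - (m + 2))`,
so `m + 2 = n₁ + 4` is the square of `m - 2j - 2`.
-/

open Polynomial
open scoped Finset

theorem Polynomial.exists_le_card_support_coeff_eq_zero {R : Type*} [Semiring R] (p : R[X]) :
    ∃ k ≤ #p.support, p.coeff k = 0 := by
  obtain ⟨k, hk, hks⟩ := Finset.exists_mem_notMem_of_card_lt_card
    (s := p.support) (t := Finset.range (#p.support + 1)) (by simp)
  exact ⟨k, Nat.lt_succ_iff.mp (Finset.mem_range.mp hk), notMem_support_iff.mp hks⟩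

section CommRing

variable {R : Type*} [CommRing R]

theorem Nat.cast_choose_succ_mul (n k : ℕ) :
    (n.choose (k + 1) : R) * (k + 1) = n.choose k * (n - k) := by
  rcases le_or_gt k n with hk | hk
  · simpa [Nat.cast_sub hk] using congrArg (Nat.cast (R := R)) (Nat.choose_succ_right_eq n k)
  · simp [Nat.choose_eq_zero_of_lt hk, Nat.choose_eq_zero_of_lt (hk.trans k.lt_succ_self)]

theorem Polynomial.coeff_one_sub_X_pow_s4 (m j : ℕ) :
    ((1 - X : R[X]) ^ m).coeff j = (-1) ^ j * m.choose j := by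
  induction m generalizing j with
  | zero => cases j <;> simp [coeff_one]
  | succ m ih =>
    rw [pow_succ, mul_one_sub, coeff_sub]
    cases j with
    | zero => simp [ih]
    | succ j => rw [coeff_mul_X, ih, ih, Nat.choose_succ_succ']; push_cast; ring

theorem Polynomial.mul_one_add_X_sq (q : R[X]) :
    q * (1 + X) ^ 2 = q + C 2 * (q * X) + q * X ^ 2 := by
  rw [map_ofNat]; ring

theorem Polynomial.coeff_one_sub_X_pow_mul_one_add_X_sq_one (m : ℕ) :
    ((1 - X : R[X]) ^ m * (1 + X) ^ 2).coeff 1 = 2 - (m : R) := by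
  rw [mul_one_add_X_sq, coeff_add, coeff_add, coeff_C_mul, coeff_mul_X, coeff_mul_X_pow',
    if_neg (by omega), coeff_one_sub_X_pow_s4, coeff_one_sub_X_pow_s4]
  simp only [pow_one, pow_zero, Nat.choose_one_right, Nat.choose_zero_right, Nat.cast_one]
  ring

theorem Polynomial.coeff_one_sub_X_pow_mul_one_add_X_sq_add_two (m j : ℕ) :
    ((1 - X : R[X]) ^ m * (1 + X) ^ 2).coeff (j + 2) =
      (-1) ^ j * ((m.choose (j + 2) + m.choose j : R) - 2 * m.choose (j + 1)) := by
  rw [mul_one_add_X_sq, coeff_add, coeff_add, coeff_C_mul, coeff_mul_X, coeff_mul_X_pow,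
    coeff_one_sub_X_pow_s4, coeff_one_sub_X_pow_s4, coeff_one_sub_X_pow_s4]
  ring

end CommRing

theorem Nat.choose_second_difference (m j : ℕ) :
    ((j + 1) * (j + 2) : ℤ) * (m.choose (j + 2) + m.choose j - 2 * m.choose (j + 1)) =
      m.choose j * (((m : ℤ) - 2 * j - 2) ^ 2 - (m + 2)) := by
  have h₁ := Nat.cast_choose_succ_mul (R := ℤ) m j
  have h₂ := Nat.cast_choose_succ_mul (R := ℤ) m (j + 1)
  push_cast at h₂
  linear_combination (j + 1 : ℤ) * h₂ + ((m : ℤ) - j - 1 - 2 * (j + 2)) * h₁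

theorem isSquare_add_two_of_choose_add_choose_eq {m j : ℕ} (hj : j ≤ m)
    (h : m.choose (j + 2) + m.choose j = 2 * m.choose (j + 1)) : IsSquare (m + 2) := by
  have hzero : (m.choose j : ℤ) * (((m : ℤ) - 2 * j - 2) ^ 2 - (m + 2)) = 0 := by
    rw [← Nat.choose_second_difference, ← Nat.cast_add, h]; push_cast; ring
  have hchoose : (m.choose j : ℤ) ≠ 0 := by exact_mod_cast (Nat.choose_pos hj).ne'
  have hsq := sub_eq_zero.mp ((mul_eq_zero.mp hzero).resolve_left hchoose)
  rw [← Int.isSquare_natCast_iff]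
  push_cast
  exact hsq ▸ IsSquare.sq _

/-- If the polynomial `(1 − t)^{n₁} (1 − t²)²` has exactly `n₁ + 3` nonzero coefficients,
then `n = n₁ + 4` is a perfect square. -/
theorem stmt4 (n₁ : ℕ)
    (h : (((1 - X) ^ n₁ * (1 - X ^ 2) ^ 2 : Polynomial ℚ)).support.card = n₁ + 3) :
    IsSquare (n₁ + 4) := by
  have hp : ((1 - X) ^ n₁ * (1 - X ^ 2) ^ 2 : ℚ[X]) = (1 - X) ^ (n₁ + 2) * (1 + X) ^ 2 := by
    ring
  obtain ⟨k, hk, hzero⟩ :=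
    exists_le_card_support_coeff_eq_zero ((1 - X : ℚ[X]) ^ n₁ * (1 - X ^ 2) ^ 2)
  rw [h] at hk
  rw [hp] at hzero
  match k, hk, hzero with
  | 0, _, h₀ => simp [coeff_one_sub_X_pow_s4, coeff_one_add_X_pow] at h₀
  | 1, _, h₁ =>
    rw [coeff_one_sub_X_pow_mul_one_add_X_sq_one, sub_eq_zero] at h₁
    have hm : n₁ + 2 = 2 := by exact_mod_cast h₁.symm
    obtain rfl : n₁ = 0 := by omega
    exact ⟨2, rfl⟩
  | j + 2, hj, hj₂ =>
    rw [coeff_one_sub_X_pow_mul_one_add_X_sq_add_two, mul_eq_zero, sub_eq_zero] at hj₂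
    have hchoose := hj₂.resolve_left (pow_ne_zero _ (by norm_num))
    simpa [add_assoc] using isSquare_add_two_of_choose_add_choose_eq (m := n₁ + 2) (j := j)
      (by omega) (by exact_mod_cast hchoose)
end

section
/- Let n₁ be a natural number and put n = n₁ + 6. If the polynomial (1 − t)^{n₁} (1 − t²)³ has exactly n₁ + 4 nonzero coefficients, then n is even and 3n − 2 is a perfect square. -/
open Polynomial

namespace Stmt5Aux
open Finset Nat

def gg (M : ℕ) : ℕ → ℚ
  | 0 => 1
  | 1 => (M : ℚ) - 3
  | 2 => (M.choose 2 : ℚ) - 3 * M + 3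
  | (j+3) => (M.choose (j+3) : ℚ) - 3 * (M.choose (j+2)) + 3 * (M.choose (j+1)) - M.choose j

lemma gg0 (M : ℕ) : gg M 0 = 1 := rfl
lemma gg1 (M : ℕ) : gg M 1 = (M : ℚ) - 3 := rfl
lemma gg2 (M : ℕ) : gg M 2 = (M.choose 2 : ℚ) - 3 * M + 3 := rfl
lemma gg3 (M j : ℕ) : gg M (j+3) = (M.choose (j+3) : ℚ) - 3 * (M.choose (j+2)) + 3 * (M.choose (j+1)) - M.choose j := rfl

lemma coeff_one_sub_X_pow (M k : ℕ) :
    ((1 - X : ℚ[X]) ^ M).coeff k = (-1)^k * M.choose k := by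
  have h1 : ((1 - X : ℚ[X])) ^ M = C ((-1 : ℚ)^M) * (X + C (-1)) ^ M := by
    rw [C_pow, ← mul_pow]
    congr 1
    simp only [map_neg, map_one]
    ring
  rw [h1, coeff_C_mul, coeff_X_add_C_pow]
  rcases le_or_gt k M with hk | hk
  · have h2 : (-1 : ℚ) ^ M * (-1) ^ (M - k) = (-1)^k := by
      have : (-1 : ℚ) ^ (M - k) * (-1)^k = (-1)^M := by
        rw [← pow_add]; congr 1; omega
      rw [← this, mul_comm ((-1:ℚ)^(M-k)) ((-1:ℚ)^k), mul_assoc, ← pow_add, ← two_mul,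
        pow_mul, neg_one_sq, one_pow, mul_one]
    rw [← mul_assoc, h2]
  · rw [Nat.choose_eq_zero_of_lt hk]
    push_cast; ring

lemma coeffP (m k : ℕ) :
    ((1 - X) ^ m * (1 - X ^ 2) ^ 3 : ℚ[X]).coeff k = (-1)^k * gg (m+3) k := by
  have hq : ((1 - X) ^ m * (1 - X ^ 2) ^ 3 : ℚ[X])
      = (1 - X) ^ (m + 3) + ((1 - X) ^ (m+3) * X ^ 1) * C 3
        + ((1 - X) ^ (m+3) * X ^ 2) * C 3 + (1 - X) ^ (m+3) * X ^ 3 := by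
    rw [show (C (3:ℚ)) = (3 : ℚ[X]) from map_ofNat C 3, pow_add]
    ring
  rw [hq]
  simp only [coeff_add, coeff_mul_C, coeff_mul_X_pow', coeff_one_sub_X_pow]
  match k with
  | 0 => simp [gg]
  | 1 => simp [gg]
  | 2 => simp [gg]; ring
  | (j+3) =>
    simp only [gg, show 1 ≤ j+3 by omega, show 2 ≤ j+3 by omega, show 3 ≤ j+3 by omega,
      if_pos, show j+3-1 = j+2 from rfl, show j+3-2 = j+1 from rfl, show j+3-3 = j from rfl]
    ring

lemma gg_symm (m : ℕ) : ∀ k ≤ m + 6, gg (m+3) (m+6-k) = - gg (m+3) k := by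
  suffices H : ∀ k, 2*k ≤ m+6 → gg (m+3) (m+6-k) = - gg (m+3) k by
    intro k hk
    rcases le_or_gt (2*k) (m+6) with h | h
    · exact H k h
    · have h2 := H (m+6-k) (by omega)
      rw [show m+6-(m+6-k) = k by omega] at h2
      linarith
  intro k hk2
  match k, hk2 with
  | 0, _ =>
    rw [show m+6-0 = m+3+3 from rfl]
    simp [gg, Nat.choose_eq_zero_of_lt, Nat.choose_self]
  | 1, _ =>
    rw [show m+6-1 = (m+2)+3 from rfl]
    simp only [gg]
    rw [Nat.choose_eq_zero_of_lt (by omega), Nat.choose_eq_zero_of_lt (by omega),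
      show m+2+1 = m+3 from rfl, Nat.choose_self,
      show (m+3).choose (m+2) = (m+3).choose 1 from by
        rw [← Nat.choose_symm (by omega)]; congr 1; omega,
      Nat.choose_one_right]
    push_cast; ring
  | 2, _ =>
    rw [show m+6-2 = (m+1)+3 from rfl]
    simp only [gg]
    rw [Nat.choose_eq_zero_of_lt (by omega),
      show m+1+2 = m+3 from rfl, Nat.choose_self,
      show (m+3).choose (m+1+1) = (m+3).choose 1 from by
        rw [← Nat.choose_symm (by omega)]; congr 1; omega,
      show (m+3).choose (m+1) = (m+3).choose 2 from by
        rw [← Nat.choose_symm (by omega)]; congr 1; omega,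
      Nat.choose_one_right]
    push_cast; ring
  | (j+3), hk2 =>
    have hj : j ≤ m := by omega
    obtain ⟨i, hi⟩ : ∃ i, m - j = i ∧ i + j = m := ⟨m - j, rfl, by omega⟩
    rw [show m+6-(j+3) = i+3 from by omega]
    simp only [gg]
    rw [show (m+3).choose (i+3) = (m+3).choose j from by
        rw [← Nat.choose_symm (show j ≤ m+3 by omega)]; congr 1; omega,
      show (m+3).choose (i+2) = (m+3).choose (j+1) from by
        rw [← Nat.choose_symm (show j+1 ≤ m+3 by omega)]; congr 1; omega,
      show (m+3).choose (i+1) = (m+3).choose (j+2) from by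
        rw [← Nat.choose_symm (show j+2 ≤ m+3 by omega)]; congr 1; omega,
      show (m+3).choose i = (m+3).choose (j+3) from by
        rw [← Nat.choose_symm (show j+3 ≤ m+3 by omega)]; congr 1; omega]
    ring

lemma key (m j : ℕ) (hj : j ≤ m) :
    gg (m+3) (j+3) * ((j+1) * (j+2) * (j+3) : ℚ) =
      ((m+3).choose j : ℚ) * (2*j - m) * ((3*m + 16) - (2*j - m)^2) := by
  have cast_sub : ∀ i : ℕ, i ≤ m + 3 → ((m + 3 - i : ℕ) : ℚ) = (m:ℚ) + 3 - i := by
    intro i hi; push_cast [Nat.cast_sub hi]; ring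
  have h1 : ((m+3).choose (j+1) : ℚ) * (j+1) = ((m+3).choose j : ℚ) * ((m:ℚ) + 3 - j) := by
    have := Nat.choose_succ_right_eq (m+3) j
    have hc := congrArg (fun x : ℕ => (x : ℚ)) this
    push_cast at hc
    rw [cast_sub j (by omega)] at hc
    linarith
  have h2 : ((m+3).choose (j+2) : ℚ) * (j+2) = ((m+3).choose (j+1) : ℚ) * ((m:ℚ) + 2 - j) := by
    have := Nat.choose_succ_right_eq (m+3) (j+1)
    have hc := congrArg (fun x : ℕ => (x : ℚ)) this
    push_cast at hc
    rw [show ((m + 2 - j : ℕ) : ℚ) = (m:ℚ) + 2 - j from by push_cast [Nat.cast_sub (show j ≤ m+2 by omega)]; ring] at hc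
    simp only [show j+1+1 = j+2 from rfl] at hc
    linarith
  have h3 : ((m+3).choose (j+3) : ℚ) * (j+3) = ((m+3).choose (j+2) : ℚ) * ((m:ℚ) + 1 - j) := by
    have := Nat.choose_succ_right_eq (m+3) (j+2)
    have hc := congrArg (fun x : ℕ => (x : ℚ)) this
    push_cast at hc
    rw [show ((m + 1 - j : ℕ) : ℚ) = (m:ℚ) + 1 - j from by push_cast [Nat.cast_sub (show j ≤ m+1 by omega)]; ring] at hc
    simp only [show j+2+1 = j+3 from rfl] at hc
    linarith
  have e1 : ((m+3).choose (j+1) : ℚ) = ((m+3).choose j : ℚ) * ((m:ℚ) + 3 - j) / (j+1) := by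
    field_simp; linarith
  have e2 : ((m+3).choose (j+2) : ℚ) = ((m+3).choose (j+1) : ℚ) * ((m:ℚ) + 2 - j) / (j+2) := by
    field_simp; linarith
  have e3 : ((m+3).choose (j+3) : ℚ) = ((m+3).choose (j+2) : ℚ) * ((m:ℚ) + 1 - j) / (j+3) := by
    field_simp; linarith
  simp only [gg]
  rw [e3, e2, e1]
  field_simp
  ring

end Stmt5Aux

open Stmt5Aux in
/-- If the polynomial `(1 − t)^{n₁} (1 − t²)³` has exactly `n₁ + 4` nonzero coefficients,
then `n = n₁ + 6` is even and `3n − 2` is a perfect square. -/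
theorem stmt5 (n₁ : ℕ)
    (h : (((1 - X) ^ n₁ * (1 - X ^ 2) ^ 3 : Polynomial ℚ)).support.card = n₁ + 4) :
    Even (n₁ + 6) ∧ IsSquare (3 * (n₁ + 6) - 2) := by
  set m := n₁ with hm
  set p : ℚ[X] := (1 - X) ^ m * (1 - X ^ 2) ^ 3 with hp
  -- membership characterization via gg
  have hcoeff : ∀ k, p.coeff k = 0 ↔ gg (m+3) k = 0 := by
    intro k
    rw [hp, coeffP]
    constructor
    · intro h0
      have : ((-1:ℚ))^k ≠ 0 := by positivity
      exact (mul_eq_zero.mp h0).resolve_left this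
    · intro h0; rw [h0, mul_zero]
  -- support is inside range (m+7)
  have hsupp : p.support ⊆ Finset.range (m+7) := by
    intro k hk
    rw [Polynomial.mem_support_iff] at hk
    rw [Finset.mem_range]
    by_contra hge
    apply hk
    rw [hcoeff k]
    obtain ⟨j, rfl⟩ : ∃ j, k = j + 3 := ⟨k - 3, by omega⟩
    rw [gg3]
    rw [Nat.choose_eq_zero_of_lt (by omega), Nat.choose_eq_zero_of_lt (by omega),
      Nat.choose_eq_zero_of_lt (by omega), Nat.choose_eq_zero_of_lt (by omega)]
    norm_num
  -- the zero set
  set Z : Finset ℕ := (Finset.range (m+7)).filter (fun k => p.coeff k = 0) with hZ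
  have hZcard : Z.card = 3 := by
    have hZeq : Z = (Finset.range (m+7)) \ p.support := by
      ext k
      simp only [hZ, Finset.mem_filter, Finset.mem_sdiff, Polynomial.mem_support_iff, not_not]
    rw [hZeq, Finset.card_sdiff_of_subset hsupp, h, Finset.card_range]
    omega
  have hZmem : ∀ k, k ∈ Z ↔ k ≤ m + 6 ∧ gg (m+3) k = 0 := by
    intro k
    rw [hZ, Finset.mem_filter, Finset.mem_range, hcoeff]
    constructor <;> rintro ⟨h1, h2⟩ <;> exact ⟨by omega, h2⟩
  -- flip
  have hflip : ∀ k ∈ Z, m + 6 - k ∈ Z := by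
    intro k hk
    rw [hZmem] at hk ⊢
    exact ⟨by omega, by rw [gg_symm m k hk.1, hk.2, neg_zero]⟩
  -- parity: m must be even
  have hmeven : Even m := by
    by_contra hodd
    rw [Nat.not_even_iff_odd] at hodd
    have hprod : ∏ _x ∈ Z, (-1 : ℚ) = 1 := by
      apply Finset.prod_involution (fun a _ => m + 6 - a)
      · intro a ha; norm_num
      · intro a ha _
        have : a ≤ m + 6 := ((hZmem a).mp ha).1
        obtain ⟨c, hc⟩ := hodd
        omega
      · exact hflip
      · intro a ha
        have : a ≤ m + 6 := ((hZmem a).mp ha).1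
        omega
    rw [Finset.prod_const, hZcard] at hprod
    norm_num at hprod
  obtain ⟨a, ha⟩ := hmeven
  have hma : m = 2 * a := by omega
  -- middle coefficient is zero
  have hmid : (a + 3) ∈ Z := by
    rw [hZmem]
    refine ⟨by omega, ?_⟩
    rw [show a + 3 = a + 3 from rfl, gg3]
    rw [show (m+3).choose (a+3) = (m+3).choose a from by
        rw [← Nat.choose_symm (show a ≤ m+3 by omega)]; congr 1; omega,
      show (m+3).choose (a+2) = (m+3).choose (a+1) from by
        rw [← Nat.choose_symm (show a+1 ≤ m+3 by omega)]; congr 1; omega]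
    ring
  -- find another zero
  have hne : (Z.erase (a+3)).Nonempty := by
    rw [← Finset.card_pos, Finset.card_erase_of_mem hmid, hZcard]
    norm_num
  obtain ⟨k, hk⟩ := hne
  have hkZ : k ∈ Z := Finset.mem_of_mem_erase hk
  have hkne : k ≠ a + 3 := Finset.ne_of_mem_erase hk
  have hkle : k ≤ m + 6 := ((hZmem k).mp hkZ).1
  -- WLOG 2k < m+6
  obtain ⟨k', hk'Z, hk'lt⟩ : ∃ k', k' ∈ Z ∧ 2 * k' < m + 6 := by
    rcases lt_trichotomy (2*k) (m+6) with hlt | heq | hgt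
    · exact ⟨k, hkZ, hlt⟩
    · exfalso; apply hkne; omega
    · exact ⟨m + 6 - k, hflip k hkZ, by omega⟩
  have hk'gg : gg (m+3) k' = 0 := ((hZmem k').mp hk'Z).2
  match k', hk'lt with
  | 0, _ => rw [gg0] at hk'gg; norm_num at hk'gg
  | 1, _ =>
    -- m = 0
    rw [gg1] at hk'gg
    have : (m : ℚ) = 0 := by push_cast at hk'gg ⊢; linarith
    have hm0 : m = 0 := by exact_mod_cast this
    rw [hm0]
    exact ⟨by decide, ⟨4, by norm_num⟩⟩
  | 2, _ =>
    exfalso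
    rw [gg2] at hk'gg
    have hch : ((m+3).choose 2 : ℚ) = (2*a+3) * (a+1) := by
      rw [Nat.choose_two_right]
      rw [show (m+3) * (m+3-1) = 2 * ((2*a+3) * (a+1)) from by
        rw [hma, show 2*a+3-1 = 2*a+2 from by omega]; ring]
      rw [Nat.mul_div_cancel_left _ (by norm_num)]
      push_cast; ring
    rw [hch, hma] at hk'gg
    push_cast at hk'gg
    have hnat : 2 * (a * a) = a + 3 := by
      have hq : (2:ℚ) * ((a:ℚ) * a) = (a:ℚ) + 3 := by linear_combination hk'gg
      exact_mod_cast hq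
    rcases Nat.lt_or_ge a 2 with hlt | hge
    · interval_cases a <;> omega
    · have h2a : 2 * a ≤ a * a := Nat.mul_le_mul_right a hge
      omega
  | (j+3), hk'lt =>
    have hj : j ≤ m := by omega
    have hkey := key m j hj
    rw [hk'gg, zero_mul] at hkey
    have hch : (0:ℚ) < ((m+3).choose j : ℚ) := by
      exact_mod_cast Nat.choose_pos (show j ≤ m + 3 by omega)
    have hXne : (2*(j:ℚ) - m) ≠ 0 := by
      intro h0
      have : (2*j : ℚ) = (m:ℚ) := by linarith
      have : 2 * j = m := by exact_mod_cast this
      omega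
    have hsq : (2*(j:ℚ) - m)^2 = 3*m + 16 := by
      rcases mul_eq_zero.mp hkey.symm with h1 | h2
      · rcases mul_eq_zero.mp h1 with h3 | h4
        · exact absurd h3 (ne_of_gt hch)
        · exact absurd h4 hXne
      · linarith
    -- extract nat square
    set d : ℕ := m - 2 * j with hd
    have hdlt : 2 * j < m := by omega
    have hdq : ((d : ℚ))^2 = 3*m + 16 := by
      rw [show ((d:ℕ):ℚ) = (m:ℚ) - 2*j from by
        rw [hd, Nat.cast_sub (by omega)]; push_cast; ring]
      rw [← hsq]; ring
    have hdn : d * d = 3 * m + 16 := by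
      have : ((d*d : ℕ) : ℚ) = ((3*m+16 : ℕ) : ℚ) := by push_cast; rw [← hdq]; ring
      exact_mod_cast this
    refine ⟨⟨a + 3, by omega⟩, ⟨d, ?_⟩⟩
    rw [show 3 * (m + 6) - 2 = 3 * m + 16 from by omega, hdn]
end

section
/- For every integer n with 8 < n ≤ 10000 there do not exist integers i₁, i₂, i₃, i₄ such that ((n − 2x)² − (3n − 4))² − (6n² − 18n + 16) = 16 (x − i₁)(x − i₂)(x − i₃)(x − i₄) as polynomials in the variable x with rational coefficients. (Equivalently: for no such n are the four numbers (n ± √(3n − 4 ± √(6n² − 18n + 16)))/2 all integers.) -/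
open Polynomial

/-! ### Computable square-root checking (kernel-reducible) -/

/-- Binary search for the square root: invariant `lo ≤ √m < hi`. -/
def bs : ℕ → ℕ → ℕ → ℕ → ℕ
| 0, _, lo, _ => lo
| f+1, m, lo, hi =>
  if hi ≤ lo + 1 then lo
  else
    let mid := (lo+hi)/2
    if mid*mid ≤ m then bs f m mid hi else bs f m lo mid

lemma bs_correct : ∀ (f m lo hi a : ℕ), lo ≤ a → a < hi → m = a*a →
    hi ≤ lo + 2^f → bs f m lo hi = a := by
  intro f
  induction f with
  | zero => intro m lo hi a h1 h2 _ h4; simp only [bs]; omega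
  | succ f ih =>
    intro m lo hi a h1 h2 h3 h4
    have hp : (2:ℕ)^(f+1) = 2 * 2^f := by ring
    by_cases h : hi ≤ lo + 1
    · simp only [bs, if_pos h]; omega
    · simp only [bs, if_neg h]
      by_cases hm : ((lo+hi)/2) * ((lo+hi)/2) ≤ m
      · simp only [if_pos hm]
        have hma : (lo+hi)/2 ≤ a := by
          by_contra hc
          push_neg at hc
          have : a * a < ((lo+hi)/2) * ((lo+hi)/2) :=
            Nat.mul_lt_mul_of_lt_of_le hc (le_of_lt hc) (by omega)
          omega
        exact ih m ((lo+hi)/2) hi a hma h2 h3 (by omega)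
      · simp only [if_neg hm]
        have hma : a < (lo+hi)/2 := by
          by_contra hc
          push_neg at hc
          have : ((lo+hi)/2) * ((lo+hi)/2) ≤ a * a := Nat.mul_le_mul hc hc
          omega
        exact ih m lo ((lo+hi)/2) a h1 hma h3 (by omega)

def isSq (m : ℕ) : Bool := (bs 30 m 0 (m+1)) ^ 2 == m

lemma isSq_of (m a : ℕ) (h : m = a*a) (hm : m < 2^30) : isSq m = true := by
  have ham : a ≤ m := by nlinarith
  have hb := bs_correct 30 m 0 (m+1) a (Nat.zero_le _) (by omega) h (by omega)
  show ((bs 30 m 0 (m+1)) ^ 2 == m) = true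
  rw [hb, h, pow_two]
  simp

def qr64 (x : ℕ) : Bool :=
  x == 0 || x == 1 || x == 4 || x == 9 || x == 16 || x == 17 || x == 25 ||
  x == 33 || x == 36 || x == 41 || x == 49 || x == 57

def qr63 (x : ℕ) : Bool :=
  x == 0 || x == 1 || x == 4 || x == 7 || x == 9 || x == 16 || x == 18 ||
  x == 22 || x == 25 || x == 28 || x == 36 || x == 37 || x == 43 || x == 46 ||
  x == 49 || x == 58

def qr65 (x : ℕ) : Bool :=
  x == 0 || x == 1 || x == 4 || x == 9 || x == 10 || x == 14 || x == 16 ||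
  x == 25 || x == 26 || x == 29 || x == 30 || x == 35 || x == 36 || x == 39 ||
  x == 40 || x == 49 || x == 51 || x == 55 || x == 56 || x == 61 || x == 64

def fullchk (N d : ℕ) : Bool :=
  !((bs 30 d 0 (d+1)) ^ 2 == d) || !(isSq (3*N-4 + bs 30 d 0 (d+1))) ||
    !(isSq (3*N-4 - bs 30 d 0 (d+1)))

def good (N : ℕ) : Bool :=
  let d := 6*N^2 - 18*N + 16
  !(qr64 (d % 64)) || !(qr63 (d % 63)) || !(qr65 (d % 65)) || fullchk N d

set_option maxRecDepth 8000 in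
set_option maxHeartbeats 4000000 in
lemma allgood : ∀ a : ℕ, a < 100 → ∀ b : ℕ, b < 100 →
    good (9 + (100*a + b)) = true := by decide

lemma qr64_sq : ∀ r : ℕ, r < 64 → qr64 (r*r % 64) = true := by decide
lemma qr63_sq : ∀ r : ℕ, r < 63 → qr63 (r*r % 63) = true := by decide
lemma qr65_sq : ∀ r : ℕ, r < 65 → qr65 (r*r % 65) = true := by decide

/-- The key arithmetic impossibility, in `ℕ`. -/
lemma arith_key (N k a b : ℕ) (hN9 : 9 ≤ N) (hN : N ≤ 10008)
    (hd : 6*N^2 - 18*N + 16 = k*k)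
    (hkle : k ≤ 3*N - 4)
    (ha : 3*N - 4 + k = a*a) (hb : 3*N - 4 - k = b*b) : False := by
  set d := 6*N^2 - 18*N + 16 with hddef
  have hdlt : d < 2^30 := by
    have : N^2 ≤ 10008^2 := Nat.pow_le_pow_left hN 2
    omega
  have hdpos : 1 ≤ d := by
    have : 9^2 ≤ N^2 := Nat.pow_le_pow_left hN9 2
    have h18 : 18*N ≤ 2*N^2 := by nlinarith
    omega
  have hk1 : 1 ≤ k := by nlinarith
  have hkled : k ≤ d := by
    calc k ≤ k * k := Nat.le_mul_of_pos_left k hk1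
    _ = d := hd.symm
  have hbs : bs 30 d 0 (d+1) = k :=
    bs_correct 30 d 0 (d+1) k (Nat.zero_le _) (by omega) hd (by omega)
  -- good N = true
  have hNN : N = 9 + (100 * ((N-9)/100) + (N-9)%100) := by omega
  have hg : good N = true := by
    rw [hNN]; exact allgood ((N-9)/100) (by omega) ((N-9)%100) (by omega)
  -- but all the checks in good N succeed, so good N = false
  have h64 : qr64 (d % 64) = true := by
    have : d % 64 = (k % 64) * (k % 64) % 64 := by rw [hd, Nat.mul_mod]
    rw [this]; exact qr64_sq _ (Nat.mod_lt _ (by norm_num))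
  have h63 : qr63 (d % 63) = true := by
    have : d % 63 = (k % 63) * (k % 63) % 63 := by rw [hd, Nat.mul_mod]
    rw [this]; exact qr63_sq _ (Nat.mod_lt _ (by norm_num))
  have h65 : qr65 (d % 65) = true := by
    have : d % 65 = (k % 65) * (k % 65) % 65 := by rw [hd, Nat.mul_mod]
    rw [this]; exact qr65_sq _ (Nat.mod_lt _ (by norm_num))
  have hklt : k < 2^15 := by
    by_contra hc
    push_neg at hc
    have : 2^15 * 2^15 ≤ k * k := Nat.mul_le_mul hc hc
    omega
  have hsa : isSq (3*N-4 + k) = true := isSq_of _ a ha (by omega)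
  have hsb : isSq (3*N-4 - k) = true := isSq_of _ b hb (by omega)
  have hfc : fullchk N d = true := by
    simp only [good, ← hddef, h64, h63, h65, Bool.not_true, Bool.false_or] at hg
    exact hg
  rw [fullchk, hbs, hsa, hsb] at hfc
  simp [pow_two, ← hd] at hfc

/-- The key arithmetic impossibility, in `ℤ`, for `K ≥ 0`. -/
lemma arith_key_int_nonneg (n K A B : ℤ) (h1 : 8 < n) (h2 : n ≤ 10000)
    (hK0 : 0 ≤ K)
    (hK : K^2 = 6*n^2 - 18*n + 16)
    (hA : A^2 = 3*n - 4 + K) (hB : B^2 = 3*n - 4 - K) : False := by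
  lift n to ℕ using (by omega) with N hN
  lift K to ℕ using hK0 with k hk
  have hN9 : 9 ≤ N := by exact_mod_cast h1
  have hN10 : N ≤ 10000 := by exact_mod_cast h2
  have hN10k : N ≤ 10008 := by omega
  have hkle : (k:ℤ) ≤ 3*(N:ℤ) - 4 := by nlinarith [sq_nonneg B]
  refine arith_key N k A.natAbs B.natAbs hN9 hN10k ?_ ?_ ?_ ?_
  · have h18 : 18*N ≤ 6*N^2 := by nlinarith
    have : ((6*N^2 - 18*N + 16 : ℕ) : ℤ) = ((k*k : ℕ) : ℤ) := by
      push_cast [h18]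
      nlinarith [hK]
    exact_mod_cast this
  · have h4 : 4 ≤ 3*N := by omega
    have : ((3*N - 4 : ℕ) : ℤ) = 3*(N:ℤ) - 4 := by push_cast [h4]; ring
    have hkle' : (k:ℤ) ≤ ((3*N - 4 : ℕ) : ℤ) := by rw [this]; exact hkle
    exact_mod_cast hkle'
  · have h4 : 4 ≤ 3*N := by omega
    have hAA : ((A.natAbs * A.natAbs : ℕ) : ℤ) = A*A := by
      exact_mod_cast Int.natAbs_mul_self
    have : ((3*N - 4 + k : ℕ) : ℤ) = ((A.natAbs * A.natAbs : ℕ) : ℤ) := by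
      rw [hAA]; push_cast [h4]; linear_combination (-1 : ℤ) * hA
    exact_mod_cast this
  · have h4 : 4 ≤ 3*N := by omega
    have hkle' : k ≤ 3*N - 4 := by omega
    have hBB : ((B.natAbs * B.natAbs : ℕ) : ℤ) = B*B := by
      exact_mod_cast Int.natAbs_mul_self
    have : ((3*N - 4 - k : ℕ) : ℤ) = ((B.natAbs * B.natAbs : ℕ) : ℤ) := by
      rw [hBB]; push_cast [h4, hkle']; linear_combination (-1 : ℤ) * hB
    exact_mod_cast this

/-- The key arithmetic impossibility, in `ℤ`. -/
lemma arith_key_int (n K A B : ℤ) (h1 : 8 < n) (h2 : n ≤ 10000)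
    (hK : K^2 = 6*n^2 - 18*n + 16)
    (hA : A^2 = 3*n - 4 + K) (hB : B^2 = 3*n - 4 - K) : False := by
  rcases le_or_gt 0 K with hK0 | hK0
  · exact arith_key_int_nonneg n K A B h1 h2 hK0 hK hA hB
  · exact arith_key_int_nonneg n (-K) B A h1 h2 (by omega)
      (by linear_combination hK) (by linear_combination hB) (by linear_combination hA)

/-- For every integer `n` with `8 < n ≤ 10000` there do not exist integers
`i₁, i₂, i₃, i₄` such that
`((n − 2x)² − (3n − 4))² − (6n² − 18n + 16) = 16 (x − i₁)(x − i₂)(x − i₃)(x − i₄)`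
as polynomials in `x` with rational coefficients. -/
theorem stmt6 (n : ℤ) (h1 : 8 < n) (h2 : n ≤ 10000) :
    ¬ ∃ i₁ i₂ i₃ i₄ : ℤ,
        ((C (n : ℚ) - 2 * X) ^ 2 - C (3 * (n : ℚ) - 4)) ^ 2 -
            C (6 * (n : ℚ) ^ 2 - 18 * (n : ℚ) + 16) =
          16 * (X - C (i₁ : ℚ)) * (X - C (i₂ : ℚ)) * (X - C (i₃ : ℚ)) * (X - C (i₄ : ℚ)) := by
  rintro ⟨i₁, i₂, i₃, i₄, hEq⟩
  have ev : ∀ c : ℚ, (((n:ℚ) - 2*c)^2 - (3*(n:ℚ) - 4))^2 - (6*(n:ℚ)^2 - 18*(n:ℚ) + 16)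
      = 16*(c - (i₁:ℚ))*(c - (i₂:ℚ))*(c - (i₃:ℚ))*(c - (i₄:ℚ)) := by
    intro c
    have h := congrArg (eval c) hEq
    simp only [eval_sub, eval_add, eval_pow, eval_mul, eval_C, eval_X, eval_ofNat] at h
    linear_combination h
  have h0 := ev 0
  have hh1 := ev 1
  have hh2 := ev 2
  have hh3 := ev 3
  -- sum and second symmetric function of the roots
  have hA : (i₁:ℚ) + i₂ + i₃ + i₄ = 2*n := by
    linear_combination (-1/96 : ℚ)*h0 + (1/32 : ℚ)*hh1 + (-1/32 : ℚ)*hh2 + (1/96 : ℚ)*hh3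
  have hB : 16*((i₁:ℚ)*i₂ + i₁*i₃ + i₁*i₄ + i₂*i₃ + i₂*i₄ + i₃*i₄)
      = 24*(n:ℚ)^2 - 24*n + 32 := by
    linear_combination (-1 : ℚ)*h0 + (5/2 : ℚ)*hh1 + (-2 : ℚ)*hh2 + (1/2 : ℚ)*hh3
  -- each root gives a square root of the discriminant
  have er : ∀ i : ℤ, (16*((i:ℚ) - i₁)*((i:ℚ) - i₂)*((i:ℚ) - i₃)*((i:ℚ) - i₄) = 0) →
      ((n - 2*i)^2 - (3*n - 4))^2 = 6*n^2 - 18*n + 16 := by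
    intro i hz
    have hq : (((n:ℚ) - 2*i)^2 - (3*(n:ℚ) - 4))^2 = 6*(n:ℚ)^2 - 18*(n:ℚ) + 16 := by
      linear_combination (ev i) + hz
    exact_mod_cast hq
  have e₁ := er i₁ (by ring)
  have e₂ := er i₂ (by ring)
  have e₃ := er i₃ (by ring)
  have e₄ := er i₄ (by ring)
  -- the four square-root values sum to zero
  have hsumQ : (((n:ℚ) - 2*i₁)^2 - (3*(n:ℚ)-4)) + (((n:ℚ) - 2*i₂)^2 - (3*(n:ℚ)-4))
      + (((n:ℚ) - 2*i₃)^2 - (3*(n:ℚ)-4)) + (((n:ℚ) - 2*i₄)^2 - (3*(n:ℚ)-4)) = 0 := by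
    linear_combination (4*((i₁:ℚ) + i₂ + i₃ + i₄ + n))*hA - (1/2 : ℚ)*hB
  have hsum : ((n - 2*i₁)^2 - (3*n-4)) + ((n - 2*i₂)^2 - (3*n-4))
      + ((n - 2*i₃)^2 - (3*n-4)) + ((n - 2*i₄)^2 - (3*n-4)) = 0 := by
    exact_mod_cast hsumQ
  set K := (n - 2*i₁)^2 - (3*n-4) with hKdef
  have sgn : ∀ i : ℤ, ((n - 2*i)^2 - (3*n - 4))^2 = 6*n^2 - 18*n + 16 →
      (n - 2*i)^2 - (3*n-4) = K ∨ (n - 2*i)^2 - (3*n-4) = -K := by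
    intro i hi
    have hmul : (((n - 2*i)^2 - (3*n-4)) - K) * (((n - 2*i)^2 - (3*n-4)) + K) = 0 := by
      linear_combination hi - e₁
    rcases mul_eq_zero.mp hmul with h | h
    · left; linarith
    · right; linarith
  have key : ∃ A B : ℤ, A^2 = 3*n - 4 + K ∧ B^2 = 3*n - 4 - K := by
    rcases sgn i₂ e₂ with s2 | s2
    · rcases sgn i₃ e₃ with s3 | s3
      · rcases sgn i₄ e₄ with s4 | s4
        · -- all equal K, so K = 0
          have hK0 : K = 0 := by linarith
          exact ⟨n - 2*i₁, n - 2*i₁, by linear_combination -hKdef,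
            by linear_combination -hKdef + 2*hK0⟩
        · exact ⟨n - 2*i₁, n - 2*i₄, by linear_combination -hKdef,
            by linear_combination s4⟩
      · exact ⟨n - 2*i₁, n - 2*i₃, by linear_combination -hKdef,
          by linear_combination s3⟩
    · exact ⟨n - 2*i₁, n - 2*i₂, by linear_combination -hKdef,
        by linear_combination s2⟩
  obtain ⟨A, B, hA', hB'⟩ := key
  exact arith_key_int n K A B h1 h2 (by linear_combination e₁) hA' hB'
end

section
/- Let n₁ be a natural number. If the polynomial (1 − t)^{n₁} (1 − t²)(1 − t³)² has exactly n₁ + 4 nonzero coefficients, then n₁ = 2 (equivalently, its degree n = n₁ + 8 equals 10). In particular, in degree 10 one has the identity (1 − t)² (1 − t²)(1 − t³)² = 1 − 2t + 3t⁴ − 3t⁶ + 2t⁹ − t¹⁰, which has exactly 6 nonzero coefficients. -/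
open Polynomial

/-- Sign-adjusted coefficients of `(1-t)^n (1-t^2)(1-t^3)^2`:
`auxf n k = (-1)^k ·` (coefficient of `t^k`). -/
def auxf : ℕ → ℕ → ℤ
  | 0, k => if k = 0 then 1 else if k = 2 then -1 else if k = 3 then 2
      else if k = 5 then -2 else if k = 6 then 1 else if k = 8 then -1 else 0
  | n+1, 0 => auxf n 0
  | n+1, k+1 => auxf n (k+1) + auxf n k

lemma auxf_zero : ∀ n k, n + 9 ≤ k → auxf n k = 0 := by
  intro n
  induction n with
  | zero => intro k hk; simp only [auxf]; split_ifs <;> omega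
  | succ n ih =>
      intro k hk
      obtain ⟨j, rfl⟩ : ∃ j, k = j + 1 := ⟨k - 1, by omega⟩
      simp only [auxf]
      rw [ih _ (by omega), ih _ (by omega)]; ring

lemma auxf_symm : ∀ n a b, a + b = n + 8 → auxf n a = - auxf n b := by
  intro n
  induction n with
  | zero =>
      intro a b hab
      have ha : a ≤ 8 := by omega
      have hb : b = 8 - a := by omega
      subst hb
      interval_cases a <;> decide
  | succ n ih =>
      intro a b hab
      match a, b with
      | 0, 0 => omega
      | 0, j+1 =>
          have hj : j = n + 8 := by omega
          subst hj
          show auxf n 0 = -(auxf n (n+9) + auxf n (n+8))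
          rw [auxf_zero n (n+9) (by omega), ih 0 (n+8) (by omega)]; ring
      | i+1, 0 =>
          have hi : i = n + 8 := by omega
          subst hi
          show auxf n (n+9) + auxf n (n+8) = - auxf n 0
          rw [auxf_zero n (n+9) (by omega), ih (n+8) 0 (by omega)]; ring
      | i+1, j+1 =>
          show auxf n (i+1) + auxf n i = -(auxf n (j+1) + auxf n j)
          rw [ih (i+1) j (by omega), ih i (j+1) (by omega)]; ring

lemma auxf_pos : ∀ t k, 2 * k ≤ t + 11 → 0 < auxf (t + 4) k := by
  intro t
  induction t with
  | zero =>
      intro k hk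
      have : k ≤ 5 := by omega
      interval_cases k <;> decide
  | succ t ih =>
      intro k hk
      match k with
      | 0 => show 0 < auxf (t+4) 0; exact ih 0 (by omega)
      | j+1 =>
          show 0 < auxf (t+4) (j+1) + auxf (t+4) j
          have h2 : 0 < auxf (t+4) j := ih j (by omega)
          rcases Nat.lt_or_ge (2 * (j+1)) (t + 12) with h | h
          · exact add_pos (ih (j+1) (by omega)) h2
          · have hmid : auxf (t+4) (j+1) = 0 := by
              have := auxf_symm (t+4) (j+1) (j+1) (by omega)
              omega
            rw [hmid]; simpa using h2

lemma auxf_ne : ∀ n k, 4 ≤ n → k ≤ n + 8 → 2 * k ≠ n + 8 → auxf n k ≠ 0 := by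
  intro n k hn hk hne
  obtain ⟨t, rfl⟩ : ∃ t, n = t + 4 := ⟨n - 4, by omega⟩
  rcases Nat.lt_or_ge (2 * k) (t + 12) with h | h
  · exact ne_of_gt (auxf_pos t k (by omega))
  · have hgt : t + 12 < 2 * k := by omega
    have hsymm := auxf_symm (t + 4) k (t + 12 - k) (by omega)
    have hpos : 0 < auxf (t + 4) (t + 12 - k) := auxf_pos t _ (by omega)
    omega

lemma coeff_P : ∀ n k, ((1 - X) ^ n * ((1 - X ^ 2) * (1 - X ^ 3) ^ 2) : Polynomial ℚ).coeff k
    = (-1) ^ k * (auxf n k : ℚ) := by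
  intro n
  induction n with
  | zero =>
      intro k
      have h : ((1 - X) ^ 0 * ((1 - X ^ 2) * (1 - X ^ 3) ^ 2) : Polynomial ℚ)
          = 1 - X ^ 2 - 2 * X ^ 3 + 2 * X ^ 5 + X ^ 6 - X ^ 8 := by ring
      rw [h]
      rcases Nat.lt_or_ge k 9 with hk | hk
      · interval_cases k <;> simp [auxf, coeff_one, coeff_X_pow] <;> norm_num
      · rw [show auxf 0 k = 0 by simp only [auxf]; split_ifs <;> omega]
        simp only [coeff_sub, coeff_add, coeff_one, coeff_X_pow, Int.cast_zero, mul_zero]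
        have h2 : (2:Polynomial ℚ) * X ^ 3 = C 2 * X ^ 3 := by rw [map_ofNat]
        have h5 : (2:Polynomial ℚ) * X ^ 5 = C 2 * X ^ 5 := by rw [map_ofNat]
        rw [h2, h5, coeff_C_mul, coeff_C_mul, coeff_X_pow, coeff_X_pow]
        split_ifs <;> first | omega | norm_num
  | succ n ih =>
      intro k
      have h : ((1 - X) ^ (n+1) * ((1 - X ^ 2) * (1 - X ^ 3) ^ 2) : Polynomial ℚ)
          = ((1 - X) ^ n * ((1 - X ^ 2) * (1 - X ^ 3) ^ 2)) -
            X * ((1 - X) ^ n * ((1 - X ^ 2) * (1 - X ^ 3) ^ 2)) := by ring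
      rw [h, coeff_sub]
      match k with
      | 0 =>
          rw [mul_coeff_zero X _, coeff_X_zero, zero_mul, ih 0]
          show _ = (-1:ℚ)^0 * (auxf n 0 : ℚ)
          ring
      | j+1 =>
          rw [coeff_X_mul, ih (j+1), ih j]
          show _ = (-1:ℚ)^(j+1) * ((auxf n (j+1) + auxf n j : ℤ) : ℚ)
          push_cast
          ring

lemma mem_support_P (n k : ℕ) :
    k ∈ ((1 - X) ^ n * ((1 - X ^ 2) * (1 - X ^ 3) ^ 2) : Polynomial ℚ).support ↔
      auxf n k ≠ 0 := by
  rw [Polynomial.mem_support_iff, coeff_P]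
  have hne : ((-1:ℚ))^k ≠ 0 := pow_ne_zero _ (by norm_num)
  constructor
  · intro h h0
    exact h (by rw [h0]; simp)
  · intro h hc
    rcases mul_eq_zero.mp hc with h1 | h1
    · exact hne h1
    · exact h (by exact_mod_cast h1)

lemma support_P2 :
    ((1 - X) ^ 2 * ((1 - X ^ 2) * (1 - X ^ 3) ^ 2) : Polynomial ℚ).support
      = {0, 1, 4, 6, 9, 10} := by
  ext k
  rw [mem_support_P]
  rcases Nat.lt_or_ge k 11 with hk | hk
  · interval_cases k <;> decide
  · rw [auxf_zero 2 k (by omega)]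
    constructor
    · intro hcon; exact absurd rfl hcon
    · intro hmem; exfalso; fin_cases hmem <;> omega

/-- If the polynomial `(1 − t)^{n₁} (1 − t²)(1 − t³)²` has exactly `n₁ + 4` nonzero
coefficients, then `n₁ = 2` (equivalently, its degree `n = n₁ + 8` equals `10`).
In particular, in degree `10` one has
`(1 − t)² (1 − t²)(1 − t³)² = 1 − 2t + 3t⁴ − 3t⁶ + 2t⁹ − t¹⁰`, which has exactly `6`
nonzero coefficients. -/
theorem stmt9 :
    (∀ n₁ : ℕ,
        (((1 - X) ^ n₁ * (1 - X ^ 2) * (1 - X ^ 3) ^ 2 : Polynomial ℚ)).support.card = n₁ + 4 →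
          n₁ = 2) ∧
      ((1 - X) ^ 2 * (1 - X ^ 2) * (1 - X ^ 3) ^ 2 : Polynomial ℚ) =
        1 - 2 * X + 3 * X ^ 4 - 3 * X ^ 6 + 2 * X ^ 9 - X ^ 10 ∧
      (((1 - X) ^ 2 * (1 - X ^ 2) * (1 - X ^ 3) ^ 2 : Polynomial ℚ)).support.card = 6 := by
  refine ⟨?_, by ring, ?_⟩
  · intro n h
    rw [mul_assoc] at h
    rcases Nat.lt_or_ge n 4 with hn | hn
    · interval_cases n
      · -- n = 0
        exfalso
        have hs : ({0, 2, 3, 5, 6} : Finset ℕ) ⊆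
            ((1 - X) ^ 0 * ((1 - X ^ 2) * (1 - X ^ 3) ^ 2) : Polynomial ℚ).support := by
          intro k hk
          fin_cases hk <;> rw [mem_support_P] <;> decide
        have := Finset.card_le_card hs
        rw [h] at this
        simp at this
      · -- n = 1
        exfalso
        have hs : ({0, 1, 2, 3, 4, 5} : Finset ℕ) ⊆
            ((1 - X) ^ 1 * ((1 - X ^ 2) * (1 - X ^ 3) ^ 2) : Polynomial ℚ).support := by
          intro k hk
          fin_cases hk <;> rw [mem_support_P] <;> decide
        have := Finset.card_le_card hs
        rw [h] at this
        simp at this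
      · rfl
      · -- n = 3
        exfalso
        have hs : ({0, 1, 2, 4, 5, 6, 7, 9} : Finset ℕ) ⊆
            ((1 - X) ^ 3 * ((1 - X ^ 2) * (1 - X ^ 3) ^ 2) : Polynomial ℚ).support := by
          intro k hk
          fin_cases hk <;> rw [mem_support_P] <;> decide
        have := Finset.card_le_card hs
        rw [h] at this
        simp at this
    · -- n ≥ 4
      exfalso
      have hs : (Finset.range (n + 9)).erase ((n + 8) / 2) ⊆
          ((1 - X) ^ n * ((1 - X ^ 2) * (1 - X ^ 3) ^ 2) : Polynomial ℚ).support := by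
        intro k hk
        rw [Finset.mem_erase, Finset.mem_range] at hk
        rw [mem_support_P]
        exact auxf_ne n k hn (by omega) (by omega)
      have hcard := Finset.card_le_card hs
      rw [h, Finset.card_erase_of_mem (Finset.mem_range.mpr (by omega)),
        Finset.card_range] at hcard
      omega
  · rw [mul_assoc, support_P2]
    rfl
end

section
/- For all integers k and l, one has e₁^k · e₂^l = (k, l, kl/2, k²l/12, −kl²/12) in G, where powers are taken with respect to the group structure of G. -/
/-- The simply connected nilpotent Lie group of type `(2,3,5)` in exponential
coordinates: the underlying set is `ℝ⁵`. -/
@[ext]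
structure G235 where
  a : ℝ
  b : ℝ
  c : ℝ
  d : ℝ
  e : ℝ

namespace G235

/-- The Baker–Campbell–Hausdorff multiplication. -/
noncomputable instance : Mul G235 :=
  ⟨fun x y =>
    ⟨x.a + y.a, x.b + y.b,
      x.c + y.c + (x.a * y.b - x.b * y.a) / 2,
      x.d + y.d + (x.a * y.c - x.c * y.a) / 2 + (x.a - y.a) * (x.a * y.b - x.b * y.a) / 12,
      x.e + y.e + (x.b * y.c - x.c * y.b) / 2 + (x.b - y.b) * (x.a * y.b - x.b * y.a) / 12⟩⟩

instance : One G235 := ⟨⟨0, 0, 0, 0, 0⟩⟩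

noncomputable instance : Inv G235 := ⟨fun x => ⟨-x.a, -x.b, -x.c, -x.d, -x.e⟩⟩

@[simp] lemma mul_a (x y : G235) : (x * y).a = x.a + y.a := rfl
@[simp] lemma mul_b (x y : G235) : (x * y).b = x.b + y.b := rfl
@[simp] lemma mul_c (x y : G235) :
    (x * y).c = x.c + y.c + (x.a * y.b - x.b * y.a) / 2 := rfl
@[simp] lemma mul_d (x y : G235) :
    (x * y).d = x.d + y.d + (x.a * y.c - x.c * y.a) / 2 +
      (x.a - y.a) * (x.a * y.b - x.b * y.a) / 12 := rfl
@[simp] lemma mul_e (x y : G235) :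
    (x * y).e = x.e + y.e + (x.b * y.c - x.c * y.b) / 2 +
      (x.b - y.b) * (x.a * y.b - x.b * y.a) / 12 := rfl
@[simp] lemma one_a : (1 : G235).a = 0 := rfl
@[simp] lemma one_b : (1 : G235).b = 0 := rfl
@[simp] lemma one_c : (1 : G235).c = 0 := rfl
@[simp] lemma one_d : (1 : G235).d = 0 := rfl
@[simp] lemma one_e : (1 : G235).e = 0 := rfl
@[simp] lemma inv_a (x : G235) : x⁻¹.a = -x.a := rfl
@[simp] lemma inv_b (x : G235) : x⁻¹.b = -x.b := rfl
@[simp] lemma inv_c (x : G235) : x⁻¹.c = -x.c := rfl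
@[simp] lemma inv_d (x : G235) : x⁻¹.d = -x.d := rfl
@[simp] lemma inv_e (x : G235) : x⁻¹.e = -x.e := rfl

/-- The BCH multiplication makes `G235` a group with identity `0` and inverse `-x`. -/
noncomputable instance : Group G235 where
  mul_assoc x y z := by ext <;> simp <;> ring
  one_mul x := by ext <;> simp
  mul_one x := by ext <;> simp
  inv_mul_cancel x := by ext <;> simp <;> ring

/-- `G235` carries the Euclidean topology of `ℝ⁵`. -/
instance : TopologicalSpace G235 :=
  TopologicalSpace.induced (fun x => (x.a, x.b, x.c, x.d, x.e)) inferInstance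

/-- The generator `e₁ = (1,0,0,0,0)`. -/
noncomputable def e1 : G235 := ⟨1, 0, 0, 0, 0⟩

/-- The generator `e₂ = (0,1,0,0,0)`. -/
noncomputable def e2 : G235 := ⟨0, 1, 0, 0, 0⟩

end G235

open G235

/-! In exponential coordinates every BCH correction term of `x · (t x)` vanishes, so one-parameter
subgroups are lines through the origin and `x ^ k = k x`; the formula is then one multiplication. -/

namespace G235

lemma zpow_eq (x : G235) (k : ℤ) :
    x ^ k = ⟨k * x.a, k * x.b, k * x.c, k * x.d, k * x.e⟩ := by
  induction k using Int.induction_on with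
  | zero => ext <;> simp
  | succ n ih =>
    rw [zpow_add_one, ih]
    ext <;> simp only [mul_a, mul_b, mul_c, mul_d, mul_e] <;> push_cast <;> ring
  | pred n ih =>
    rw [zpow_sub_one, ih]
    ext <;> simp only [mul_a, mul_b, mul_c, mul_d, mul_e, inv_a, inv_b, inv_c, inv_d, inv_e] <;>
      push_cast <;> ring

end G235

/-- For all integers `k` and `l`, `e₁^k · e₂^l = (k, l, kl/2, k²l/12, −kl²/12)` in `G`,
powers taken with respect to the group structure of `G`. -/
theorem stmt11 (k l : ℤ) :
    e1 ^ k * e2 ^ l =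
      ⟨(k : ℝ), (l : ℝ), (k : ℝ) * (l : ℝ) / 2, (k : ℝ) ^ 2 * (l : ℝ) / 12,
        -((k : ℝ) * (l : ℝ) ^ 2) / 12⟩ := by
  rw [zpow_eq, zpow_eq]
  ext <;> simp only [e1, e2, mul_a, mul_b, mul_c, mul_d, mul_e] <;> ring
end

section
/- The subgroup Γ₀ of G generated by e₁ and e₂ equals the set of all x ∈ ℝ⁵ satisfying: x₁ ∈ ℤ, x₂ ∈ ℤ, x₃ − x₁x₂/2 ∈ ℤ, x₄ − x₁²x₂/12 − ((x₁+1)/2)·(x₃ − x₁x₂/2) ∈ ℤ, and x₅ + x₁x₂²/12 + ((x₂+1)/2)·(x₃ − x₁x₂/2) ∈ ℤ. -/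
open G235

open scoped commutatorElement

theorem Subgroup.commutatorElement_mem {K : Type*} [Group K] {H : Subgroup K} {g h : K}
    (hg : g ∈ H) (hh : h ∈ H) : ⁅g, h⁆ ∈ H := by
  rw [commutatorElement_def]
  exact mul_mem (mul_mem (mul_mem hg hh) (inv_mem hg)) (inv_mem hh)

namespace G235

noncomputable def scale (t : ℝ) (x : G235) : G235 :=
  ⟨t * x.a, t * x.b, t * x.c, t * x.d, t * x.e⟩

lemma zpow_eq_scale (x : G235) (n : ℤ) : x ^ n = scale n x := by
  induction n using Int.induction_on with
  | zero => ext <;> simp [scale]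
  | succ k ih =>
    rw [zpow_add_one, ih]
    ext <;> simp only [scale, mul_a, mul_b, mul_c, mul_d, mul_e] <;> push_cast <;> ring
  | pred k ih =>
    rw [zpow_sub_one, ih]
    ext <;> simp only [scale, mul_a, mul_b, mul_c, mul_d, mul_e, inv_a, inv_b, inv_c, inv_d, inv_e] <;>
      push_cast <;> ring

noncomputable def ofInvariants (p q r s t : ℤ) : G235 :=
  ⟨p, q, p * q / 2 + r, p ^ 2 * q / 12 + (p + 1) / 2 * r + s,
    -(p * q ^ 2 / 12) - (q + 1) / 2 * r + t⟩

lemma exists_ofInvariants_eq_iff (x : G235) :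
    (∃ p q r s t : ℤ, ofInvariants p q r s t = x) ↔
      (∃ m : ℤ, x.a = m) ∧ (∃ m : ℤ, x.b = m) ∧
        (∃ m : ℤ, x.c - x.a * x.b / 2 = m) ∧
        (∃ m : ℤ, x.d - x.a ^ 2 * x.b / 12 - (x.a + 1) / 2 * (x.c - x.a * x.b / 2) = m) ∧
        (∃ m : ℤ, x.e + x.a * x.b ^ 2 / 12 + (x.b + 1) / 2 * (x.c - x.a * x.b / 2) = m) := by
  constructor
  · rintro ⟨p, q, r, s, t, rfl⟩
    refine ⟨⟨p, rfl⟩, ⟨q, rfl⟩, ⟨r, ?_⟩, ⟨s, ?_⟩, ⟨t, ?_⟩⟩ <;>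
      simp only [ofInvariants] <;> ring
  · rintro ⟨⟨p, hp⟩, ⟨q, hq⟩, ⟨r, hr⟩, ⟨s, hs⟩, ⟨t, ht⟩⟩
    rw [hp, hq] at hr hs ht
    have hc : x.c = p * q / 2 + r := by linear_combination hr
    rw [hc] at hs ht
    refine ⟨p, q, r, s, t, ?_⟩
    ext
    · exact hp.symm
    · exact hq.symm
    · exact hc.symm
    · simp only [ofInvariants]; linear_combination -hs
    · simp only [ofInvariants]; linear_combination -ht

lemma e1_mul_ofInvariants (p q r s t : ℤ) :
    e1 * ofInvariants p q r s t = ofInvariants (p + 1) q r s t := by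
  ext <;> simp only [e1, ofInvariants, mul_a, mul_b, mul_c, mul_d, mul_e] <;> push_cast <;> ring

lemma intCast_mul_succ_div_two (p : ℤ) : ((p * (p + 1) / 2 : ℤ) : ℝ) = p * (p + 1) / 2 := by
  rw [Int.cast_div (Int.even_mul_succ_self p).two_dvd two_ne_zero]
  push_cast
  ring

lemma e2_mul_ofInvariants (p q r s t : ℤ) :
    e2 * ofInvariants p q r s t =
      ofInvariants p (q + 1) (r - p) (s + p * (p + 1) / 2) (t + r - p) := by
  ext <;> simp only [e2, ofInvariants, mul_a, mul_b, mul_c, mul_d, mul_e] <;>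
    push_cast [intCast_mul_succ_div_two] <;> ring

lemma inv_e1_mul_ofInvariants (p q r s t : ℤ) :
    e1⁻¹ * ofInvariants p q r s t = ofInvariants (p - 1) q r s t := by
  rw [inv_mul_eq_iff_eq_mul, e1_mul_ofInvariants, sub_add_cancel]

lemma inv_e2_mul_ofInvariants (p q r s t : ℤ) :
    e2⁻¹ * ofInvariants p q r s t =
      ofInvariants p (q - 1) (r + p) (s - p * (p + 1) / 2) (t - r) := by
  rw [inv_mul_eq_iff_eq_mul, e2_mul_ofInvariants]
  congr 1 <;> ring

lemma exists_ofInvariants_eq_of_mem_closure {x : G235}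
    (hx : x ∈ Subgroup.closure ({e1, e2} : Set G235)) :
    ∃ p q r s t : ℤ, ofInvariants p q r s t = x := by
  induction hx using Subgroup.closure_induction_left with
  | one => exact ⟨0, 0, 0, 0, 0, by ext <;> simp [ofInvariants]⟩
  | mul_left g hg y _ ih =>
    obtain ⟨p, q, r, s, t, rfl⟩ := ih
    rcases hg with rfl | rfl
    · exact ⟨_, _, _, _, _, (e1_mul_ofInvariants p q r s t).symm⟩
    · exact ⟨_, _, _, _, _, (e2_mul_ofInvariants p q r s t).symm⟩
  | inv_mul_cancel g hg y _ ih =>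
    obtain ⟨p, q, r, s, t, rfl⟩ := ih
    rcases hg with rfl | rfl
    · exact ⟨_, _, _, _, _, (inv_e1_mul_ofInvariants p q r s t).symm⟩
    · exact ⟨_, _, _, _, _, (inv_e2_mul_ofInvariants p q r s t).symm⟩

lemma ofInvariants_eq_prod (p q r s t : ℤ) :
    ofInvariants p q r s t =
      e1 ^ p * e2 ^ q * ⁅e1, e2⁆ ^ r * ⁅e1, ⁅e1, e2⁆⁆ ^ s * ⁅e2, ⁅e1, e2⁆⁆ ^ (t - r * (q + 1)) := by
  simp only [zpow_eq_scale, commutatorElement_def]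
  ext <;> simp only [scale, e1, e2, ofInvariants, mul_a, mul_b, mul_c, mul_d, mul_e, inv_a, inv_b, inv_c, inv_d, inv_e] <;>
    push_cast <;> ring

lemma ofInvariants_mem_closure (p q r s t : ℤ) :
    ofInvariants p q r s t ∈ Subgroup.closure ({e1, e2} : Set G235) := by
  have h1 : e1 ∈ Subgroup.closure ({e1, e2} : Set G235) := Subgroup.subset_closure (by simp)
  have h2 : e2 ∈ Subgroup.closure ({e1, e2} : Set G235) := Subgroup.subset_closure (by simp)
  have h12 := Subgroup.commutatorElement_mem h1 h2
  rw [ofInvariants_eq_prod]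
  exact mul_mem (mul_mem (mul_mem (mul_mem (zpow_mem h1 p) (zpow_mem h2 q)) (zpow_mem h12 r))
    (zpow_mem (Subgroup.commutatorElement_mem h1 h12) s))
    (zpow_mem (Subgroup.commutatorElement_mem h2 h12) _)

end G235

/-- The subgroup `Γ₀` of `G` generated by `e₁` and `e₂` consists exactly of the points
`x ∈ ℝ⁵` with `x₁ ∈ ℤ`, `x₂ ∈ ℤ`, `x₃ − x₁x₂/2 ∈ ℤ`,
`x₄ − x₁²x₂/12 − ((x₁+1)/2)(x₃ − x₁x₂/2) ∈ ℤ` and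
`x₅ + x₁x₂²/12 + ((x₂+1)/2)(x₃ − x₁x₂/2) ∈ ℤ`. -/
theorem stmt12 (x : G235) :
    x ∈ Subgroup.closure ({e1, e2} : Set G235) ↔
      (∃ m : ℤ, x.a = m) ∧ (∃ m : ℤ, x.b = m) ∧
        (∃ m : ℤ, x.c - x.a * x.b / 2 = m) ∧
        (∃ m : ℤ, x.d - x.a ^ 2 * x.b / 12 - (x.a + 1) / 2 * (x.c - x.a * x.b / 2) = m) ∧
        (∃ m : ℤ, x.e + x.a * x.b ^ 2 / 12 + (x.b + 1) / 2 * (x.c - x.a * x.b / 2) = m) := by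
  rw [← exists_ofInvariants_eq_iff]
  constructor
  · exact exists_ofInvariants_eq_of_mem_closure
  · rintro ⟨p, q, r, s, t, rfl⟩
    exact ofInvariants_mem_closure p q r s t
end

section
/- Suppose Y₁, Y₂ ∈ 𝔤 are elements whose images in the quotient 𝔤/[𝔤,𝔤] form a basis (equivalently, in coordinates, (Y₁)₁(Y₂)₂ − (Y₁)₂(Y₂)₁ ≠ 0). Then there exists a unique Lie algebra automorphism φ : 𝔤 → 𝔤 such that φ(X₁) = Y₁ and φ(X₂) = Y₂; this automorphism need not preserve the grading. -/
/-- The Lie bracket of the 5-dimensional nilpotent Lie algebra `𝔤` of type `(2,3,5)` on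
`ℝ⁵`: `[x,y] = (0, 0, x₁y₂ − x₂y₁, x₁y₃ − x₃y₁, x₂y₃ − x₃y₂)`, corresponding to
`[X₁,X₂] = X₃`, `[X₁,X₃] = X₄`, `[X₂,X₃] = X₅`. -/
def gBracket (x y : ℝ × ℝ × ℝ × ℝ × ℝ) : ℝ × ℝ × ℝ × ℝ × ℝ :=
  (0, 0, x.1 * y.2.1 - x.2.1 * y.1, x.1 * y.2.2.1 - x.2.2.1 * y.1,
    x.2.1 * y.2.2.1 - x.2.2.1 * y.2.1)

/-!
`𝔤` is the free nilpotent Lie algebra of step 3 on the two generators `X₁, X₂`: its basis is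
`X₁, X₂, [X₁,X₂], [X₁,[X₁,X₂]], [X₂,[X₁,X₂]]`. Hence any choice of images `Y₁, Y₂` extends to a
unique bracket-preserving linear map, sending the basis to `Y₁, Y₂, Z₃ = [Y₁,Y₂], [Y₁,Z₃], [Y₂,Z₃]`.
This map is triangular for the filtration by the lower central series, with diagonal blocks
`A`, `det A`, `det A • A`, where `A` is the matrix of `Y₁, Y₂` modulo `[𝔤,𝔤]`; so it is invertible
as soon as `A` is.
-/

local notation "𝔤" => ℝ × ℝ × ℝ × ℝ × ℝ

lemma eq_zero_of_mul_sub_mul_ne_zero {K : Type*} [Field K] {a₁ a₂ b₁ b₂ u v : K}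
    (hd : a₁ * b₂ - a₂ * b₁ ≠ 0) (h₁ : a₁ * u + b₁ * v = 0) (h₂ : a₂ * u + b₂ * v = 0) :
    u = 0 ∧ v = 0 := by
  have hu : (a₁ * b₂ - a₂ * b₁) * u = 0 := by linear_combination b₂ * h₁ - b₁ * h₂
  have hv : (a₁ * b₂ - a₂ * b₁) * v = 0 := by linear_combination a₁ * h₂ - a₂ * h₁
  exact ⟨(mul_eq_zero.1 hu).resolve_left hd, (mul_eq_zero.1 hv).resolve_left hd⟩

lemma g_eq_add_smul (x : 𝔤) :
    x = x.1 • (1, 0, 0, 0, 0)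
      + x.2.1 • (0, 1, 0, 0, 0)
      + x.2.2.1 • (0, 0, 1, 0, 0)
      + x.2.2.2.1 • (0, 0, 0, 1, 0)
      + x.2.2.2.2 • (0, 0, 0, 0, 1) := by
  simp

lemma gBracket_X₁_X₂ : gBracket (1, 0, 0, 0, 0) (0, 1, 0, 0, 0) = (0, 0, 1, 0, 0) := by
  simp [gBracket]

lemma gBracket_X₁_X₃ : gBracket (1, 0, 0, 0, 0) (0, 0, 1, 0, 0) = (0, 0, 0, 1, 0) := by
  simp [gBracket]

lemma gBracket_X₂_X₃ : gBracket (0, 1, 0, 0, 0) (0, 0, 1, 0, 0) = (0, 0, 0, 0, 1) := by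
  simp [gBracket]

def gExtend (Y₁ Y₂ : 𝔤) : 𝔤 →ₗ[ℝ] 𝔤 where
  toFun x := x.1 • Y₁ + x.2.1 • Y₂ + x.2.2.1 • gBracket Y₁ Y₂
    + x.2.2.2.1 • gBracket Y₁ (gBracket Y₁ Y₂) + x.2.2.2.2 • gBracket Y₂ (gBracket Y₁ Y₂)
  map_add' x y := by simp only [Prod.fst_add, Prod.snd_add]; module
  map_smul' c x := by
    simp only [Prod.smul_fst, Prod.smul_snd, smul_eq_mul, RingHom.id_apply]
    module

lemma gExtend_apply (Y₁ Y₂ x : 𝔤) :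
    gExtend Y₁ Y₂ x = x.1 • Y₁ + x.2.1 • Y₂ + x.2.2.1 • gBracket Y₁ Y₂
      + x.2.2.2.1 • gBracket Y₁ (gBracket Y₁ Y₂) + x.2.2.2.2 • gBracket Y₂ (gBracket Y₁ Y₂) :=
  rfl

lemma gExtend_X₁ (Y₁ Y₂ : 𝔤) : gExtend Y₁ Y₂ (1, 0, 0, 0, 0) = Y₁ := by
  simp [gExtend_apply]

lemma gExtend_X₂ (Y₁ Y₂ : 𝔤) : gExtend Y₁ Y₂ (0, 1, 0, 0, 0) = Y₂ := by
  simp [gExtend_apply]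

lemma gExtend_map_gBracket (Y₁ Y₂ x y : 𝔤) :
    gExtend Y₁ Y₂ (gBracket x y) = gBracket (gExtend Y₁ Y₂ x) (gExtend Y₁ Y₂ y) := by
  simp only [Prod.ext_iff, gExtend_apply, gBracket, Prod.fst_add, Prod.snd_add, Prod.smul_fst,
    Prod.smul_snd, smul_eq_mul]
  refine ⟨by ring, by ring, by ring, by ring, by ring⟩

lemma eq_gExtend_of_map_gBracket (f : 𝔤 →ₗ[ℝ] 𝔤)
    (hf : ∀ x y, f (gBracket x y) = gBracket (f x) (f y)) :
    f = gExtend (f (1, 0, 0, 0, 0)) (f (0, 1, 0, 0, 0)) := by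
  have hX₃ : f (0, 0, 1, 0, 0) = gBracket (f (1, 0, 0, 0, 0)) (f (0, 1, 0, 0, 0)) := by
    rw [← hf, gBracket_X₁_X₂]
  have hX₄ : f (0, 0, 0, 1, 0) = gBracket (f (1, 0, 0, 0, 0)) (f (0, 0, 1, 0, 0)) := by
    rw [← hf, gBracket_X₁_X₃]
  have hX₅ : f (0, 0, 0, 0, 1) = gBracket (f (0, 1, 0, 0, 0)) (f (0, 0, 1, 0, 0)) := by
    rw [← hf, gBracket_X₂_X₃]
  refine LinearMap.ext fun x => ?_
  conv_lhs => rw [g_eq_add_smul x]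
  rw [gExtend_apply, ← hX₃, ← hX₄, ← hX₅]
  simp only [map_add, map_smul]

lemma gExtend_injective {Y₁ Y₂ : 𝔤} (h : Y₁.1 * Y₂.2.1 - Y₁.2.1 * Y₂.1 ≠ 0) :
    Function.Injective (gExtend Y₁ Y₂) := by
  obtain ⟨a₁, a₂, a₃, a₄, a₅⟩ := Y₁
  obtain ⟨b₁, b₂, b₃, b₄, b₅⟩ := Y₂
  simp only at h
  rw [← LinearMap.ker_eq_bot, LinearMap.ker_eq_bot']
  rintro ⟨x₁, x₂, x₃, x₄, x₅⟩ hx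
  simp only [gExtend_apply, gBracket, Prod.smul_mk, Prod.mk_add_mk, smul_eq_mul, mul_zero,
    add_zero, Prod.mk_eq_zero] at hx
  obtain ⟨h₁, h₂, h₃, h₄, h₅⟩ := hx
  obtain ⟨rfl, rfl⟩ : x₁ = 0 ∧ x₂ = 0 :=
    eq_zero_of_mul_sub_mul_ne_zero h (by linear_combination h₁) (by linear_combination h₂)
  obtain rfl : x₃ = 0 := (mul_eq_zero.1 (by linear_combination h₃)).resolve_left h
  obtain ⟨rfl, rfl⟩ : x₄ = 0 ∧ x₅ = 0 := eq_zero_of_mul_sub_mul_ne_zero h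
    (mul_left_cancel₀ h (by linear_combination h₄))
    (mul_left_cancel₀ h (by linear_combination h₅))
  rfl

/-- If `Y₁, Y₂ ∈ 𝔤` project to a basis of `𝔤/[𝔤,𝔤]` (in coordinates:
`(Y₁)₁(Y₂)₂ − (Y₁)₂(Y₂)₁ ≠ 0`), then there is a unique Lie algebra automorphism
`φ : 𝔤 → 𝔤` (a linear automorphism preserving the bracket) with `φ(X₁) = Y₁` and
`φ(X₂) = Y₂`. -/
theorem stmt14 (Y₁ Y₂ : ℝ × ℝ × ℝ × ℝ × ℝ)
    (h : Y₁.1 * Y₂.2.1 - Y₁.2.1 * Y₂.1 ≠ 0) :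
    ∃! φ : (ℝ × ℝ × ℝ × ℝ × ℝ) ≃ₗ[ℝ] (ℝ × ℝ × ℝ × ℝ × ℝ),
      (∀ x y, φ (gBracket x y) = gBracket (φ x) (φ y)) ∧
        φ (1, 0, 0, 0, 0) = Y₁ ∧ φ (0, 1, 0, 0, 0) = Y₂ := by
  refine ⟨.ofInjectiveEndo (gExtend Y₁ Y₂) (gExtend_injective h),
    ⟨gExtend_map_gBracket Y₁ Y₂, gExtend_X₁ Y₁ Y₂, gExtend_X₂ Y₁ Y₂⟩, ?_⟩
  rintro ψ ⟨hψ, rfl, rfl⟩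
  exact LinearEquiv.toLinearMap_injective (eq_gExtend_of_map_gBracket ψ.toLinearMap hψ)
end

section
/- Let Γ be any lattice in G, i.e. a subgroup of G which is discrete as a subset of ℝ⁵ and for which the quotient space G/Γ is compact. Then there exists a group automorphism φ of G which is also a homeomorphism of ℝ⁵ such that φ(Γ) ⊆ Γ₀. -/
open G235

/-!
Cocompactness of `Γ` gives two elements of `Γ` with linearly independent horizontal parts
`(a, b)`. The double commutator `⁅u, ⁅γ, w⁆⁆` of elements of `Γ` is central and depends only on
the horizontal part of `γ`, so discreteness of `Γ` forces the horizontal projection of `Γ` to be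
discrete, i.e. a lattice in `ℝ²`. An automorphism acting linearly on the first layer sends it to
`ℤ²`, and a shear then moves lifts of `(1, 0)` and `(0, 1)` to `e₁` and `e₂`. In the new
lattice `Γ'` the central elements form a lattice of `ℝ²` containing `ℤ²`, hence they have a
common denominator `N`. Every element of `Γ'` is a product of powers of `e₁, e₂` and an element
with zero horizontal part, whose remaining coordinates are controlled by `N` through its
commutator with `e₁` and its `N`-th power; hence the dilation by `2N` maps `Γ'` into `Γ₀`.
-/

open Filter Topology
open scoped commutatorElement

lemma Subgroup.commutatorElement_mem_s17 {G : Type*} [Group G] (S : Subgroup G) {x y : G}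
    (hx : x ∈ S) (hy : y ∈ S) : ⁅x, y⁆ ∈ S :=
  Subgroup.commutator_le.1 S.commutator_le_self _ hx _ hy

lemma Subgroup.discreteTopology_map {G H : Type*} [Group G] [Group H] [TopologicalSpace G]
    [TopologicalSpace H] (Γ : Subgroup G) [DiscreteTopology Γ] (ψ : G ≃ₜ* H) :
    DiscreteTopology (Γ.map (ψ : G →* H)) := by
  refine isDiscrete_iff_discreteTopology.1 ?_
  rw [Subgroup.coe_map]
  exact (isDiscrete_iff_discreteTopology.2 ‹_›).image ψ.toHomeomorph.isInducing

lemma isCompact_range_of_mul_right_invariant {G X : Type*} [Group G] [TopologicalSpace G]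
    [TopologicalSpace X] (Γ : Subgroup G) [CompactSpace (G ⧸ Γ)] {F : G → X}
    (hF : Continuous F) (hΓ : ∀ x, ∀ γ ∈ Γ, F (x * γ) = F x) : IsCompact (Set.range F) := by
  have hF' : ∀ x y, (QuotientGroup.leftRel Γ) x y → F x = F y := fun x y hxy => by
    rw [← mul_inv_cancel_left x y, hΓ x _ (QuotientGroup.leftRel_apply.1 hxy)]
  let F' : G ⧸ Γ → X := Quotient.lift F hF'
  have hF'c : Continuous F' := continuous_quot_lift _ hF
  rw [← show Set.range F' = Set.range F from Set.range_quot_lift _]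
  exact isCompact_range hF'c

lemma AddSubgroup.discreteTopology_of_eventually_eq_zero {E : Type*} [AddGroup E]
    [TopologicalSpace E] [IsTopologicalAddGroup E] (H : AddSubgroup E)
    (h : ∀ᶠ x in 𝓝 0, x ∈ H → x = 0) : DiscreteTopology H := by
  rw [discreteTopology_iff_isOpen_singleton_zero, isOpen_iff_mem_nhds]
  rintro _ rfl
  obtain ⟨V, hV, hVH⟩ := h.exists_mem
  exact (mem_nhds_subtype _ _ _).2 ⟨V, hV, fun x hx => Subtype.ext (hVH x hx x.2)⟩

def cross (u v : ℝ × ℝ) : ℝ := u.1 * v.2 - u.2 * v.1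

lemma cross_add_smul (a b c d : ℝ) (u v : ℝ × ℝ) :
    cross (a • u + b • v) (c • u + d • v) = (a * d - b * c) * cross u v := by
  simp only [cross, Prod.fst_add, Prod.snd_add, Prod.smul_fst, Prod.smul_snd, smul_eq_mul]
  ring

lemma cross_smul_eq (u v x : ℝ × ℝ) : cross u v • x = cross x v • u + cross u x • v := by
  ext <;> simp only [cross, Prod.fst_add, Prod.snd_add, Prod.smul_fst, Prod.smul_snd,
    smul_eq_mul] <;> ring

lemma eq_zero_of_cross_eq_zero {u v p : ℝ × ℝ} (huv : cross u v ≠ 0) (hu : cross p u = 0)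
    (hv : cross p v = 0) : p = 0 := by
  have key := cross_smul_eq u v p
  rw [hv, show cross u p = 0 by simp only [cross] at hu ⊢; linarith, zero_smul, zero_smul,
    add_zero, smul_eq_zero] at key
  exact key.resolve_left huv

lemma AddSubgroup.exists_basis_of_discreteTopology (Λ : AddSubgroup (ℝ × ℝ))
    [DiscreteTopology Λ] {u₀ v₀ : ℝ × ℝ} (hu₀ : u₀ ∈ Λ) (hv₀ : v₀ ∈ Λ) (h₀ : cross u₀ v₀ ≠ 0) :
    ∃ u ∈ Λ, ∃ v ∈ Λ, cross u v ≠ 0 ∧ ∀ w ∈ Λ, ∃ m n : ℤ, w = (m : ℝ) • u + (n : ℝ) • v := by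
  let L := Λ.toIntSubmodule
  have : DiscreteTopology L := ‹DiscreteTopology Λ›
  have : IsZLattice ℝ L := ⟨by
    refine eq_top_iff.2 fun x _ => ?_
    rw [← inv_smul_smul₀ h₀ x, cross_smul_eq]
    exact Submodule.smul_mem _ _ (add_mem (Submodule.smul_mem _ _ (Submodule.subset_span hu₀))
      (Submodule.smul_mem _ _ (Submodule.subset_span hv₀)))⟩
  have hcard : Fintype.card (Module.Free.ChooseBasisIndex ℤ L) = 2 := by
    rw [← Module.finrank_eq_card_chooseBasisIndex, ZLattice.rank ℝ L, Module.finrank_prod,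
      Module.finrank_self]
  let b := (Module.Free.chooseBasis ℤ L).reindex (Fintype.equivFinOfCardEq hcard)
  have hrep : ∀ w ∈ Λ, ∃ m n : ℤ, w = (m : ℝ) • (b 0 : ℝ × ℝ) + (n : ℝ) • (b 1 : ℝ × ℝ) := by
    intro w hw
    refine ⟨b.repr ⟨w, hw⟩ 0, b.repr ⟨w, hw⟩ 1, ?_⟩
    have := congrArg Subtype.val (b.sum_repr ⟨w, hw⟩)
    rw [Fin.sum_univ_two, Submodule.coe_add, Submodule.coe_smul, Submodule.coe_smul] at this
    simpa only [Int.cast_smul_eq_zsmul] using this.symm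
  refine ⟨b 0, (b 0).2, b 1, (b 1).2, fun h => h₀ ?_, hrep⟩
  obtain ⟨m₁, n₁, rfl⟩ := hrep u₀ hu₀
  obtain ⟨m₂, n₂, rfl⟩ := hrep v₀ hv₀
  rw [cross_add_smul, h, mul_zero]

lemma AddSubgroup.exists_common_denom_of_discreteTopology (Λ : AddSubgroup (ℝ × ℝ))
    [DiscreteTopology Λ] (h₁ : ((1 : ℝ), (0 : ℝ)) ∈ Λ) (h₂ : ((0 : ℝ), (1 : ℝ)) ∈ Λ) :
    ∃ N : ℤ, N ≠ 0 ∧ ∀ w ∈ Λ, ∃ i j : ℤ, N * w.1 = i ∧ N * w.2 = j := by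
  obtain ⟨u, -, v, -, -, hrep⟩ := Λ.exists_basis_of_discreteTopology h₁ h₂ (by simp [cross])
  obtain ⟨A, B, hAB⟩ := hrep _ h₁
  obtain ⟨C, D, hCD⟩ := hrep _ h₂
  have h11 : 1 = A * u.1 + B * v.1 := by simpa using congrArg Prod.fst hAB
  have h12 : 0 = A * u.2 + B * v.2 := by simpa using congrArg Prod.snd hAB
  have h21 : 0 = C * u.1 + D * v.1 := by simpa using congrArg Prod.fst hCD
  have h22 : 1 = C * u.2 + D * v.2 := by simpa using congrArg Prod.snd hCD
  -- `N` is the determinant of the integer matrix expressing the standard basis in `u, v`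
  refine ⟨A * D - B * C, fun h => ?_, fun w hw => ?_⟩
  · have hdet := cross_add_smul A B C D u v
    rw [← hAB, ← hCD] at hdet
    simp [cross, ← Int.cast_mul, ← Int.cast_sub, h] at hdet
  · obtain ⟨m, n, rfl⟩ := hrep w hw
    refine ⟨m * D - n * C, n * A - m * B, ?_, ?_⟩
    · push_cast
      simp only [Prod.fst_add, Prod.smul_fst, smul_eq_mul]
      linear_combination (n * C - m * D : ℝ) * h11 + (m * B - n * A : ℝ) * h21
    · push_cast
      simp only [Prod.snd_add, Prod.smul_snd, smul_eq_mul]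
      linear_combination (n * C - m * D : ℝ) * h12 + (m * B - n * A : ℝ) * h22

namespace G235

lemma continuous_coords : Continuous fun x : G235 => (x.a, x.b, x.c, x.d, x.e) :=
  continuous_induced_dom

@[fun_prop] lemma continuous_a : Continuous G235.a := continuous_coords.fst
@[fun_prop] lemma continuous_b : Continuous G235.b := continuous_coords.snd.fst
@[fun_prop] lemma continuous_c : Continuous G235.c := continuous_coords.snd.snd.fst
@[fun_prop] lemma continuous_d : Continuous G235.d := continuous_coords.snd.snd.snd.fst
@[fun_prop] lemma continuous_e : Continuous G235.e := continuous_coords.snd.snd.snd.snd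

@[fun_prop]
lemma continuous_mk {X : Type*} [TopologicalSpace X] {a b c d e : X → ℝ}
    (ha : Continuous a) (hb : Continuous b) (hc : Continuous c) (hd : Continuous d)
    (he : Continuous e) : Continuous fun x => (⟨a x, b x, c x, d x, e x⟩ : G235) :=
  continuous_induced_rng.2 (ha.prodMk (hb.prodMk (hc.prodMk (hd.prodMk he))))

lemma zpow_eq_mk (x : G235) (n : ℤ) :
    x ^ n = ⟨n * x.a, n * x.b, n * x.c, n * x.d, n * x.e⟩ := by
  induction n using Int.induction_on with
  | zero => ext <;> simp
  | succ n ih => rw [zpow_add_one, ih]; ext <;> simp <;> ring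
  | pred n ih => rw [zpow_sub_one, ih]; ext <;> simp <;> ring

lemma commutatorElement_eq_of_a_b_eq_zero (x y : G235) (ha : y.a = 0) (hb : y.b = 0) :
    ⁅x, y⁆ = ⟨0, 0, 0, x.a * y.c, x.b * y.c⟩ := by
  ext <;> simp [commutatorElement_def, ha, hb] <;> ring

lemma commutatorElement_e1_e2 : ⁅e1, e2⁆ = ⟨0, 0, 1, 1 / 2, 1 / 2⟩ := by
  ext <;> simp [commutatorElement_def, e1, e2] <;> norm_num

lemma mk_zero_zero_mem {S : Subgroup G235} (h₁ : e1 ∈ S) (h₂ : e2 ∈ S) (C D E : ℤ) :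
    (⟨0, 0, 2 * C, D, E⟩ : G235) ∈ S := by
  have hz : (⟨0, 0, 1, 1 / 2, 1 / 2⟩ : G235) ∈ S :=
    commutatorElement_e1_e2 ▸ S.commutatorElement_mem_s17 h₁ h₂
  have hd := S.commutatorElement_mem_s17 h₁ hz
  have he := S.commutatorElement_mem_s17 h₂ hz
  rw [commutatorElement_eq_of_a_b_eq_zero _ _ rfl rfl] at hd he
  have key : (⟨0, 0, 2 * C, D, E⟩ : G235) = ⟨0, 0, 1, 1 / 2, 1 / 2⟩ ^ (2 * C) *
      ⟨0, 0, 0, e1.a * 1, e1.b * 1⟩ ^ (D - C) * ⟨0, 0, 0, e2.a * 1, e2.b * 1⟩ ^ (E - C) := by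
    simp only [zpow_eq_mk]
    ext <;> simp [e1, e2] <;> ring
  rw [key]
  exact mul_mem (mul_mem (zpow_mem hz _) (zpow_mem hd _)) (zpow_mem he _)

noncomputable def glAut (p q r s : ℝ) (h : p * s - q * r ≠ 0) : G235 ≃ₜ* G235 where
  toFun x := ⟨p * x.a + q * x.b, r * x.a + s * x.b, (p * s - q * r) * x.c,
    (p * s - q * r) * (p * x.d + q * x.e), (p * s - q * r) * (r * x.d + s * x.e)⟩
  invFun y := ⟨(s * y.a - q * y.b) / (p * s - q * r), (p * y.b - r * y.a) / (p * s - q * r),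
    y.c / (p * s - q * r), (s * y.d - q * y.e) / (p * s - q * r) ^ 2,
    (p * y.e - r * y.d) / (p * s - q * r) ^ 2⟩
  left_inv x := by ext <;> field_simp (disch := grind) <;> ring
  right_inv y := by ext <;> field_simp (disch := grind) <;> ring
  map_mul' x y := by ext <;> simp <;> ring
  continuous_toFun := by fun_prop
  continuous_invFun := by fun_prop

lemma glAut_apply (p q r s : ℝ) (h : p * s - q * r ≠ 0) (x : G235) :
    glAut p q r s h x = ⟨p * x.a + q * x.b, r * x.a + s * x.b, (p * s - q * r) * x.c,
      (p * s - q * r) * (p * x.d + q * x.e), (p * s - q * r) * (r * x.d + s * x.e)⟩ :=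
  rfl

noncomputable def shearAut (P Q R P' Q' R' : ℝ) : G235 ≃ₜ* G235 where
  toFun x := ⟨x.a, x.b, x.c + P * x.a + P' * x.b,
    x.d + Q * x.a + Q' * x.b + P' * x.c, x.e + R * x.a + R' * x.b - P * x.c⟩
  invFun y := ⟨y.a, y.b, y.c - P * y.a - P' * y.b,
    y.d - Q * y.a - Q' * y.b - P' * (y.c - P * y.a - P' * y.b),
    y.e - R * y.a - R' * y.b + P * (y.c - P * y.a - P' * y.b)⟩
  left_inv x := by ext <;> simp <;> ring
  right_inv y := by ext <;> simp <;> ring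
  map_mul' x y := by ext <;> simp <;> ring
  continuous_toFun := by fun_prop
  continuous_invFun := by fun_prop

noncomputable def dilation (t : ℝ) (ht : t ≠ 0) : G235 ≃ₜ* G235 :=
  glAut t 0 0 t (by simpa using ht)

lemma dilation_apply (t : ℝ) (ht : t ≠ 0) (x : G235) :
    dilation t ht x = ⟨t * x.a, t * x.b, t ^ 2 * x.c, t ^ 3 * x.d, t ^ 3 * x.e⟩ := by
  simp only [dilation, glAut_apply]
  ext <;> dsimp only <;> ring

def horizontal (x : G235) : ℝ × ℝ := (x.a, x.b)

@[simp] lemma horizontal_mul (x y : G235) :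
    horizontal (x * y) = horizontal x + horizontal y := rfl

def horizontalLattice (Γ : Subgroup G235) : AddSubgroup (ℝ × ℝ) where
  carrier := horizontal '' Γ
  zero_mem' := ⟨1, Γ.one_mem, rfl⟩
  add_mem' := by
    rintro _ _ ⟨x, hx, rfl⟩ ⟨y, hy, rfl⟩
    exact ⟨x * y, Γ.mul_mem hx hy, rfl⟩
  neg_mem' := by
    rintro _ ⟨x, hx, rfl⟩
    exact ⟨x⁻¹, Γ.inv_mem hx, rfl⟩

def central (p : ℝ × ℝ) : G235 := ⟨0, 0, 0, p.1, p.2⟩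

def centralLattice (Γ : Subgroup G235) : AddSubgroup (ℝ × ℝ) where
  carrier := central ⁻¹' Γ
  zero_mem' := Γ.one_mem
  add_mem' {p q} hp hq := by
    rw [Set.mem_preimage, show central (p + q) = central p * central q by ext <;> simp [central]]
    exact Γ.mul_mem hp hq
  neg_mem' {p} hp := by
    rw [Set.mem_preimage, show central (-p) = (central p)⁻¹ by ext <;> simp [central]]
    exact Γ.inv_mem hp

lemma mem_centralLattice {Γ : Subgroup G235} {p : ℝ × ℝ} :
    p ∈ centralLattice Γ ↔ central p ∈ Γ :=
  Iff.rfl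

lemma exists_mem_cross_horizontal_ne_zero (Γ : Subgroup G235) [CompactSpace (G235 ⧸ Γ)]
    {p : ℝ × ℝ} (hp : p ≠ 0) : ∃ γ ∈ Γ, cross p (horizontal γ) ≠ 0 := by
  by_contra! h
  have hcpt := isCompact_range_of_mul_right_invariant Γ
    (F := fun x => cross p (horizontal x)) (by simp only [cross, horizontal]; fun_prop)
    (fun x γ hγ => by
      have := h γ hγ
      simp only [horizontal_mul, cross, Prod.fst_add, Prod.snd_add] at this ⊢
      linarith)
  have hsurj : Set.range (fun x => cross p (horizontal x)) = Set.univ := by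
    refine Set.eq_univ_of_forall fun t => ⟨⟨-p.2 * (t / (p.1 ^ 2 + p.2 ^ 2)),
      p.1 * (t / (p.1 ^ 2 + p.2 ^ 2)), 0, 0, 0⟩, ?_⟩
    have : p.1 ^ 2 + p.2 ^ 2 ≠ 0 := by
      contrapose! hp
      ext <;> dsimp only [Prod.fst_zero, Prod.snd_zero] <;> nlinarith [sq_nonneg p.1, sq_nonneg p.2]
    simp only [cross, horizontal]
    field_simp
    ring
  exact noncompact_univ ℝ (hsurj ▸ hcpt)

lemma exists_mem_cross_ne_zero (Γ : Subgroup G235) [CompactSpace (G235 ⧸ Γ)] :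
    ∃ u ∈ Γ, ∃ v ∈ Γ, cross (horizontal u) (horizontal v) ≠ 0 := by
  obtain ⟨u, hu, hu0⟩ := exists_mem_cross_horizontal_ne_zero Γ (p := (1, 0)) (by simp)
  have : horizontal u ≠ 0 := fun h => hu0 (by simp [h, cross])
  obtain ⟨v, hv, hv0⟩ := exists_mem_cross_horizontal_ne_zero Γ this
  exact ⟨u, hu, v, hv, hv0⟩

lemma discreteTopology_horizontalLattice (Γ : Subgroup G235) [DiscreteTopology Γ] {u v : G235}
    (hu : u ∈ Γ) (hv : v ∈ Γ) (huv : cross (horizontal u) (horizontal v) ≠ 0) :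
    DiscreteTopology (horizontalLattice Γ) := by
  obtain ⟨U, hU, hUΓ⟩ := nhds_inter_eq_singleton_of_mem_discrete
    (isDiscrete_iff_discreteTopology.2 ‹_›) Γ.one_mem
  have hu0 : horizontal u ≠ 0 := fun h => huv (by simp [h, cross])
  have key : ∀ w ∈ Γ, ∀ᶠ p in 𝓝 0, p ∈ horizontalLattice Γ → cross p (horizontal w) = 0 := by
    intro w hw
    -- the value of `⁅u, ⁅γ, w⁆⁆` at `horizontal γ = p`
    let κ : ℝ × ℝ → G235 := fun p =>
      ⟨0, 0, 0, u.a * cross p (horizontal w), u.b * cross p (horizontal w)⟩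
    have hκ : Tendsto κ (𝓝 0) (𝓝 1) := by
      have : Continuous κ := by simp only [κ, cross]; fun_prop
      have h0 : κ 0 = 1 := by ext <;> simp [κ, cross]
      exact h0 ▸ this.tendsto 0
    filter_upwards [hκ hU] with p hpU ⟨γ, hγ, hγp⟩
    subst hγp
    have hcomm : ⁅u, ⁅γ, w⁆⁆ = κ (horizontal γ) := by
      ext <;> simp [commutatorElement_def, κ, cross, horizontal] <;> ring
    have hκ1 : κ (horizontal γ) = 1 := by
      rw [← Set.mem_singleton_iff, ← hUΓ]
      exact ⟨hpU, hcomm ▸ Γ.commutatorElement_mem_s17 hu (Γ.commutatorElement_mem_s17 hγ hw)⟩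
    by_contra hc
    apply hu0
    have ha := congrArg G235.d hκ1
    have hb := congrArg G235.e hκ1
    simp only [κ, one_d, one_e, mul_eq_zero, hc, or_false] at ha hb
    simp [horizontal, ha, hb]
  refine AddSubgroup.discreteTopology_of_eventually_eq_zero _ ?_
  filter_upwards [key u hu, key v hv] with p h1 h2 hp
  exact eq_zero_of_cross_eq_zero huv (h1 hp) (h2 hp)

lemma exists_aut_horizontal_eq {u v : ℝ × ℝ} (huv : cross u v ≠ 0) :
    ∃ φ : G235 ≃ₜ* G235, ∀ x (m n : ℝ), horizontal x = m • u + n • v →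
      horizontal (φ x) = (m, n) := by
  have hdet : v.2 / cross u v * (u.1 / cross u v) - -v.1 / cross u v * (-u.2 / cross u v) =
      (cross u v)⁻¹ := by
    field_simp
    simp only [cross]
    ring
  refine ⟨glAut _ _ _ _ (hdet ▸ inv_ne_zero huv), fun x m n hx => ?_⟩
  have ha : x.a = m * u.1 + n * v.1 := by simpa [horizontal] using congrArg Prod.fst hx
  have hb : x.b = m * u.2 + n * v.2 := by simpa [horizontal] using congrArg Prod.snd hx
  simp only [horizontal, glAut_apply, ha, hb, Prod.mk.injEq]
  constructor <;> field_simp <;> simp only [cross] <;> ring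

lemma exists_aut_eq_e1_e2 {g₁ g₂ : G235} (h₁ : horizontal g₁ = (1, 0))
    (h₂ : horizontal g₂ = (0, 1)) :
    ∃ φ : G235 ≃ₜ* G235, φ g₁ = e1 ∧ φ g₂ = e2 ∧ ∀ x, horizontal (φ x) = horizontal x := by
  simp only [horizontal, Prod.mk.injEq] at h₁ h₂
  refine ⟨shearAut (-g₁.c) (-g₁.d + g₂.c * g₁.c) (-g₁.e - g₁.c ^ 2) (-g₂.c)
    (-g₂.d + g₂.c ^ 2) (-g₂.e - g₁.c * g₂.c), ?_, ?_, fun x => rfl⟩ <;>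
  · ext <;> simp [shearAut, e1, e2, h₁, h₂] <;> ring

lemma exists_aut_map_horizontal_integral (Γ : Subgroup G235) [DiscreteTopology Γ]
    [CompactSpace (G235 ⧸ Γ)] :
    ∃ ψ : G235 ≃ₜ* G235, e1 ∈ Γ.map (ψ : G235 →* G235) ∧ e2 ∈ Γ.map (ψ : G235 →* G235) ∧
      ∀ x ∈ Γ.map (ψ : G235 →* G235), ∃ m n : ℤ, x.a = m ∧ x.b = n := by
  obtain ⟨u₀, hu₀, v₀, hv₀, h₀⟩ := exists_mem_cross_ne_zero Γ
  have := discreteTopology_horizontalLattice Γ hu₀ hv₀ h₀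
  obtain ⟨_, ⟨g₁, hg₁, rfl⟩, _, ⟨g₂, hg₂, rfl⟩, huv, hrep⟩ :=
    (horizontalLattice Γ).exists_basis_of_discreteTopology ⟨u₀, hu₀, rfl⟩ ⟨v₀, hv₀, rfl⟩ h₀
  obtain ⟨φ₁, hφ₁⟩ := exists_aut_horizontal_eq huv
  obtain ⟨φ₂, h₁, h₂, hφ₂⟩ :=
    exists_aut_eq_e1_e2 (hφ₁ g₁ 1 0 (by simp)) (hφ₁ g₂ 0 1 (by simp))
  refine ⟨φ₁.trans φ₂, ⟨g₁, hg₁, h₁⟩, ⟨g₂, hg₂, h₂⟩, ?_⟩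
  rintro _ ⟨γ, hγ, rfl⟩
  obtain ⟨m, n, hmn⟩ := hrep _ ⟨γ, hγ, rfl⟩
  have := (hφ₂ (φ₁ γ)).trans (hφ₁ γ m n hmn)
  exact ⟨m, n, congrArg Prod.fst this, congrArg Prod.snd this⟩

lemma exists_central_common_denom (S : Subgroup G235) [DiscreteTopology S]
    (h₁ : e1 ∈ S) (h₂ : e2 ∈ S) :
    ∃ N : ℤ, N ≠ 0 ∧ ∀ d e : ℝ, (⟨0, 0, 0, d, e⟩ : G235) ∈ S →
      ∃ i j : ℤ, N * d = i ∧ N * e = j := by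
  have hcont : Continuous central := by unfold central; fun_prop
  have hinj : Function.Injective central := fun p q h => by
    simpa [central, Prod.ext_iff] using h
  have hdisc : IsDiscrete (central ⁻¹' (S : Set G235)) :=
    (isDiscrete_iff_discreteTopology.2 ‹_›).preimage hcont.continuousOn hinj
  have : DiscreteTopology (centralLattice S) := isDiscrete_iff_discreteTopology.1 hdisc
  have hmem (D E : ℤ) : ((D : ℝ), (E : ℝ)) ∈ centralLattice S := by
    simpa [mem_centralLattice, central] using mk_zero_zero_mem h₁ h₂ 0 D E
  obtain ⟨N, hN, hNL⟩ := (centralLattice S).exists_common_denom_of_discreteTopology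
    (by simpa using hmem 1 0) (by simpa using hmem 0 1)
  exact ⟨N, hN, fun d e hde => hNL (d, e) hde⟩

lemma dilation_mem_of_a_b_eq_zero {S T : Subgroup G235} (hS₁ : e1 ∈ S) (hS₂ : e2 ∈ S)
    (hT₁ : e1 ∈ T) (hT₂ : e2 ∈ T) {N : ℤ} (hN : (2 * N : ℝ) ≠ 0)
    (hcen : ∀ d e : ℝ, (⟨0, 0, 0, d, e⟩ : G235) ∈ S → ∃ i j : ℤ, N * d = i ∧ N * e = j)
    {w : G235} (hw : w ∈ S) (ha : w.a = 0) (hb : w.b = 0) :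
    dilation (2 * N) hN w ∈ T := by
  have hc : (⟨0, 0, 0, w.c, 0⟩ : G235) ∈ S := by
    simpa [commutatorElement_eq_of_a_b_eq_zero _ _ ha hb, e1] using S.commutatorElement_mem_s17 hS₁ hw
  obtain ⟨i, -, hi, -⟩ := hcen _ _ hc
  have hde : (⟨0, 0, 0, N * w.d - i / 2, N * w.e - i / 2⟩ : G235) ∈ S := by
    have key : w ^ N * ⁅e1, e2⁆ ^ (-i) = ⟨0, 0, 0, N * w.d - i / 2, N * w.e - i / 2⟩ := by
      rw [commutatorElement_e1_e2, zpow_eq_mk, zpow_eq_mk]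
      ext <;> simp only [mul_a, mul_b, mul_c, mul_d, mul_e, ha, hb] <;> push_cast
      case c => linear_combination hi
      all_goals ring
    exact key ▸ mul_mem (zpow_mem hw N) (zpow_mem (S.commutatorElement_mem_s17 hS₁ hS₂) _)
  obtain ⟨j, k, hj, hk⟩ := hcen _ _ hde
  convert mk_zero_zero_mem hT₁ hT₂ (2 * N * i) (8 * N * j + 4 * N ^ 2 * i)
    (8 * N * k + 4 * N ^ 2 * i) using 1
  ext <;> simp only [dilation_apply, ha, hb, mul_zero] <;> push_cast
  · linear_combination (4 * N : ℝ) * hi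
  · linear_combination (8 * N : ℝ) * hj
  · linear_combination (8 * N : ℝ) * hk

lemma dilation_mem {S T : Subgroup G235} (hS₁ : e1 ∈ S) (hS₂ : e2 ∈ S)
    (hT₁ : e1 ∈ T) (hT₂ : e2 ∈ T) (hhor : ∀ x ∈ S, ∃ m n : ℤ, x.a = m ∧ x.b = n)
    {N : ℤ} (hN : (2 * N : ℝ) ≠ 0)
    (hcen : ∀ d e : ℝ, (⟨0, 0, 0, d, e⟩ : G235) ∈ S → ∃ i j : ℤ, N * d = i ∧ N * e = j)
    {x : G235} (hx : x ∈ S) :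
    dilation (2 * N) hN x ∈ T := by
  obtain ⟨m, n, hm, hn⟩ := hhor x hx
  set w := x * e2 ^ (-n) * e1 ^ (-m)
  have hw : w ∈ S := mul_mem (mul_mem hx (zpow_mem hS₂ _)) (zpow_mem hS₁ _)
  have hwa : w.a = 0 := by simp [w, zpow_eq_mk, e1, e2, hm]
  have hwb : w.b = 0 := by simp [w, zpow_eq_mk, e1, e2, hn]
  have hx_eq : x = w * e1 ^ m * e2 ^ n := by simp [w]
  have hδe₁ : dilation (2 * N) hN e1 = e1 ^ (2 * N) := by
    ext <;> simp [dilation_apply, zpow_eq_mk, e1]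
  have hδe₂ : dilation (2 * N) hN e2 = e2 ^ (2 * N) := by
    ext <;> simp [dilation_apply, zpow_eq_mk, e2]
  rw [hx_eq, map_mul, map_mul, map_zpow, map_zpow, hδe₁, hδe₂]
  exact mul_mem (mul_mem (dilation_mem_of_a_b_eq_zero hS₁ hS₂ hT₁ hT₂ hN hcen hw hwa hwb)
    (zpow_mem (zpow_mem hT₁ _) _)) (zpow_mem (zpow_mem hT₂ _) _)

end G235


/-- If `Γ` is a lattice in `G` (a subgroup which is discrete as a subset of `ℝ⁵` and whose
quotient `G/Γ` is compact), then there is a group automorphism of `G` which is also a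
homeomorphism of `ℝ⁵` mapping `Γ` into `Γ₀`. -/
theorem stmt17 (Γ : Subgroup G235) (hdisc : DiscreteTopology Γ)
    (hcpt : CompactSpace (G235 ⧸ Γ)) :
    ∃ φ : G235 ≃* G235, Continuous φ ∧ Continuous φ.symm ∧
      ∀ x ∈ Γ, φ x ∈ Subgroup.closure ({e1, e2} : Set G235) := by
  obtain ⟨ψ, h₁, h₂, hhor⟩ := exists_aut_map_horizontal_integral Γ
  have := Γ.discreteTopology_map ψ
  obtain ⟨N, hN, hcen⟩ := exists_central_common_denom _ h₁ h₂
  have hN' : (2 * N : ℝ) ≠ 0 := by simpa using hN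
  let φ := ψ.trans (dilation (2 * N) hN')
  refine ⟨φ.toMulEquiv, φ.continuous, φ.symm.continuous, fun x hx => ?_⟩
  exact dilation_mem h₁ h₂ (Subgroup.subset_closure (by simp)) (Subgroup.subset_closure (by simp))
    hhor hN' hcen (Subgroup.mem_map_of_mem _ hx)
end

section
/- With the notation of the context, the telescoping identity ∏_q det(Δ_q)^{(−1)^q N_q} = ( ∏_q det(D_q^* D_q restricted to L^q)^{(−1)^q} )^{−κ} holds as an equality of positive real numbers. -/
/-!
Acyclicity gives the orthogonal splitting `C^q = K^q ⊕ L^q` with `K^q = range D_{q-1} = ker D_q`,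
on which `Δ_q` acts as `(D_{q-1} D_{q-1}^*)^{a_{q-1}}` and `(D_q^* D_q)^{a_q}` respectively.
As `D_{q-1}` maps `L^{q-1}` isomorphically onto `K^q`, intertwining `D_{q-1}^* D_{q-1}` with
`D_{q-1} D_{q-1}^*`, this gives `det Δ_q = t_{q-1}^{a_{q-1}} t_q^{a_q}` for the positive reals
`t_q = det (D_q^* D_q|L^q)`. In the alternating product `t_q` then occurs with total exponent
`(-1)^q a_q (N_q - N_{q+1}) = -(-1)^q κ`.
-/

open Function LinearMap
open scoped ComplexOrder InnerProductSpace

namespace LinearMap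

section Field

variable {K V : Type*} [Field K] [AddCommGroup V] [Module K V] [FiniteDimensional K V]
  {p q : Submodule K V}

theorem det_eq_det_restrict_mul_det_restrict (h : IsCompl p q) (f : V →ₗ[K] V)
    (hp : ∀ x ∈ p, f x ∈ p) (hq : ∀ x ∈ q, f x ∈ q) :
    f.det = (f.restrict hp).det * (f.restrict hq).det := by
  let e := Submodule.prodEquivOfIsCompl p q h
  have hconj : (e : p × q →ₗ[K] V) ∘ₗ (f.restrict hp).prodMap (f.restrict hq) ∘ₗ
      (e.symm : V →ₗ[K] p × q) = f := by
    ext v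
    obtain ⟨⟨x, y⟩, rfl⟩ := e.surjective v
    simp [e, Submodule.coe_prodEquivOfIsCompl']
  conv_lhs => rw [← hconj]
  rw [det_conj, det_prodMap]

theorem det_add_of_isCompl (h : IsCompl p q) {f g : V →ₗ[K] V}
    (hfp : ∀ x ∈ p, f x ∈ p) (hfq : ∀ x ∈ q, f x = 0)
    (hgq : ∀ x ∈ q, g x ∈ q) (hgp : ∀ x ∈ p, g x = 0) :
    (f + g).det = (f.restrict hfp).det * (g.restrict hgq).det := by
  have hp : ∀ x ∈ p, (f + g) x ∈ p := fun x hx => by simpa [hgp x hx] using hfp x hx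
  have hq : ∀ x ∈ q, (f + g) x ∈ q := fun x hx => by simpa [hfq x hx] using hgq x hx
  rw [det_eq_det_restrict_mul_det_restrict h _ hp hq]
  congr 2
  · ext x
    simp [hgp _ x.2]
  · ext x
    simp [hfq _ x.2]

theorem det_pow_add_pow_of_isCompl (h : IsCompl p q) {f g : V →ₗ[K] V}
    (hf : ∀ x, f x ∈ p) (hfq : ∀ x ∈ q, f x = 0) (hg : ∀ x, g x ∈ q) (hgp : ∀ x ∈ p, g x = 0)
    {a b : ℕ} (ha : a ≠ 0) (hb : b ≠ 0) :
    (f ^ a + g ^ b).det =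
      (f.restrict fun x _ => hf x).det ^ a * (g.restrict fun x _ => hg x).det ^ b := by
  obtain ⟨a, rfl⟩ := Nat.exists_eq_succ_of_ne_zero ha
  obtain ⟨b, rfl⟩ := Nat.exists_eq_succ_of_ne_zero hb
  rw [det_add_of_isCompl h (fun x _ => by rw [pow_succ', Module.End.mul_apply]; exact hf _)
    (fun x hx => by rw [pow_succ, Module.End.mul_apply, hfq x hx, map_zero])
    (fun x _ => by rw [pow_succ', Module.End.mul_apply]; exact hg _)
    (fun x hx => by rw [pow_succ, Module.End.mul_apply, hgp x hx, map_zero]),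
    ← Module.End.pow_restrict, ← Module.End.pow_restrict, map_pow, map_pow]

end Field

section InnerProduct

variable {𝕜 E F G : Type*} [RCLike 𝕜]
  [NormedAddCommGroup E] [InnerProductSpace 𝕜 E] [FiniteDimensional 𝕜 E]
  [NormedAddCommGroup F] [InnerProductSpace 𝕜 F] [FiniteDimensional 𝕜 F]
  [NormedAddCommGroup G] [InnerProductSpace 𝕜 G] [FiniteDimensional 𝕜 G]

theorem IsSymmetric.det_pos {T : E →ₗ[𝕜] E} (hT : T.IsSymmetric)
    (hpos : ∀ x ≠ 0, 0 < RCLike.re ⟪T x, x⟫_𝕜) : 0 < T.det := by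
  rw [hT.det_eq_prod_eigenvalues rfl]
  refine Finset.prod_pos fun i _ => RCLike.ofReal_pos.mpr ?_
  have := hpos _ ((hT.eigenvectorBasis rfl).orthonormal.ne_zero i)
  simpa only [hT.apply_eigenvectorBasis, inner_smul_real_left, RCLike.smul_re,
    inner_self_eq_norm_sq, OrthonormalBasis.norm_eq_one, one_pow, mul_one] using this

theorem disjoint_ker_range_adjoint (S : E →ₗ[𝕜] F) : Disjoint (ker S) (range S.adjoint) := by
  rw [← orthogonal_ker]
  exact Submodule.orthogonal_disjoint _

theorem det_restrict_adjoint_comp_self_pos (S : E →ₗ[𝕜] F)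
    (h : ∀ x ∈ range S.adjoint, (S.adjoint ∘ₗ S) x ∈ range S.adjoint) :
    0 < ((S.adjoint ∘ₗ S).restrict h).det := by
  refine ((isPositive_adjoint_comp_self S).isSymmetric.restrict_invariant h).det_pos fun x hx => ?_
  have hSx : S x ≠ 0 := fun hSx =>
    hx (Subtype.ext (Submodule.disjoint_def.mp (disjoint_ker_range_adjoint S) x hSx x.2))
  simpa [Submodule.coe_inner, adjoint_inner_left, inner_self_eq_norm_sq]
    using pow_pos (norm_pos_iff.mpr hSx) 2

theorem det_restrict_self_comp_adjoint (S : E →ₗ[𝕜] F)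
    (h₁ : ∀ x ∈ range S, (S ∘ₗ S.adjoint) x ∈ range S)
    (h₂ : ∀ x ∈ range S.adjoint, (S.adjoint ∘ₗ S) x ∈ range S.adjoint) :
    ((S ∘ₗ S.adjoint).restrict h₁).det = ((S.adjoint ∘ₗ S).restrict h₂).det := by
  let φ : range S.adjoint →ₗ[𝕜] range S := S.restrict fun x _ => mem_range_self S x
  have hinj : Injective φ := by
    rw [← ker_eq_bot, Submodule.eq_bot_iff]
    intro x hx
    exact Subtype.ext (Submodule.disjoint_def.mp (disjoint_ker_range_adjoint S) x
      (congrArg Subtype.val hx) x.2)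
  let e := LinearEquiv.ofBijective φ
    ⟨hinj, (injective_iff_surjective_of_finrank_eq_finrank (finrank_range_adjoint S)).mp hinj⟩
  have hconj : (e : range S.adjoint →ₗ[𝕜] range S) ∘ₗ (S.adjoint ∘ₗ S).restrict h₂ ∘ₗ
      (e.symm : range S →ₗ[𝕜] range S.adjoint) = (S ∘ₗ S.adjoint).restrict h₁ := by
    ext v
    obtain ⟨x, rfl⟩ := e.surjective v
    simp only [comp_apply, LinearEquiv.coe_coe, LinearEquiv.symm_apply_apply]
    rfl
  rw [← hconj, det_conj]

theorem det_self_comp_adjoint_pow_add_adjoint_comp_self_pow (S : E →ₗ[𝕜] F) (T : F →ₗ[𝕜] G)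
    (hexact : ker T = range S) {a b : ℕ} (ha : a ≠ 0) (hb : b ≠ 0)
    (hS : ∀ x ∈ range S.adjoint, (S.adjoint ∘ₗ S) x ∈ range S.adjoint)
    (hT : ∀ x ∈ range T.adjoint, (T.adjoint ∘ₗ T) x ∈ range T.adjoint) :
    ((S ∘ₗ S.adjoint) ^ a + (T.adjoint ∘ₗ T) ^ b).det =
      ((S.adjoint ∘ₗ S).restrict hS).det ^ a * ((T.adjoint ∘ₗ T).restrict hT).det ^ b := by
  have hcompl : IsCompl (range S) (range T.adjoint) := by
    rw [← orthogonal_ker, hexact]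
    exact Submodule.isCompl_orthogonal _
  have hf0 : ∀ x ∈ range T.adjoint, (S ∘ₗ S.adjoint) x = 0 := by
    rw [← orthogonal_ker, hexact, orthogonal_range]
    intro x hx
    rw [comp_apply, mem_ker.mp hx, map_zero]
  have hg0 : ∀ x ∈ range S, (T.adjoint ∘ₗ T) x = 0 := by
    rw [← hexact]
    intro x hx
    rw [comp_apply, mem_ker.mp hx, map_zero]
  rw [det_pow_add_pow_of_isCompl hcompl (fun x => mem_range_self S _) hf0
    (fun x => mem_range_self T.adjoint _) hg0 ha hb, det_restrict_self_comp_adjoint S _ hS]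

end InnerProduct

end LinearMap

section Telescope

variable {G₀ : Type*} [CommGroupWithZero G₀]

theorem finprod_zpow_telescope {t : ℤ → G₀} (ht₀ : ∀ i, t i ≠ 0) (ht : HasFiniteMulSupport t)
    {k a : ℤ → ℕ} {κ : ℕ} (hκ : ∀ i, k i * a i = κ)
    {N : ℤ → ℤ} (hN : ∀ i, N (i + 1) - N i = (k i : ℤ)) :
    ∏ᶠ i : ℤ, (t i ^ a i * t (i + 1) ^ a (i + 1)) ^ ((((i + 1).negOnePow : ℤˣ) : ℤ) * N (i + 1)) =
      (∏ᶠ i : ℤ, t i ^ ((i.negOnePow : ℤˣ) : ℤ)) ^ (-(κ : ℤ)) := by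
  have hsupp : ∀ {f : ℤ → G₀}, (∀ i, t i = 1 → f i = 1) → HasFiniteMulSupport f :=
    fun hf => ht.subset fun i hi hti => hi (hf i hti)
  set x : ℤ → G₀ := fun i => (t i ^ a i) ^ ((((i + 1).negOnePow : ℤˣ) : ℤ) * N (i + 1))
  set y : ℤ → G₀ := fun i => (t i ^ a i) ^ (((i.negOnePow : ℤˣ) : ℤ) * N i)
  have hx : HasFiniteMulSupport x := hsupp fun i hi => by simp [x, hi]
  have hy : HasFiniteMulSupport y := hsupp fun i hi => by simp [y, hi]
  have hxy : ∀ i, x i * y i = (t i ^ ((i.negOnePow : ℤˣ) : ℤ)) ^ (-(κ : ℤ)) := by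
    intro i
    simp only [x, y, ← zpow_natCast, ← zpow_mul, ← zpow_add₀ (ht₀ i), Int.negOnePow_succ,
      Units.val_neg]
    have hka : (k i : ℤ) * a i = κ := by exact_mod_cast hκ i
    congr 1
    linear_combination (-((i.negOnePow : ℤˣ) : ℤ) * a i) * hN i - ((i.negOnePow : ℤˣ) : ℤ) * hka
  calc ∏ᶠ i : ℤ, (t i ^ a i * t (i + 1) ^ a (i + 1)) ^ ((((i + 1).negOnePow : ℤˣ) : ℤ) * N (i + 1))
      = ∏ᶠ i, x i * y (i + 1) := finprod_congr fun i => mul_zpow _ _ _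
    _ = (∏ᶠ i, x i) * ∏ᶠ i, y i := by
      rw [finprod_mul_distrib hx (hy.fun_comp_of_injective (add_left_injective 1))]
      exact congrArg _ (finprod_comp_equiv (Equiv.addRight 1))
    _ = ∏ᶠ i, (t i ^ ((i.negOnePow : ℤˣ) : ℤ)) ^ (-(κ : ℤ)) := by
      rw [← finprod_mul_distrib hx hy, finprod_congr hxy]
    _ = _ := by
      rw [zpow_neg, zpow_natCast, finprod_pow, ← finprod_inv_distrib]
      · simp only [zpow_neg, zpow_natCast]
      · exact hsupp fun i hi => by simp [hi]

end Telescope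

theorem stmt19_general
    (C : ℤ → Type)
    [∀ i, NormedAddCommGroup (C i)] [∀ i, InnerProductSpace ℂ (C i)]
    [∀ i, FiniteDimensional ℂ (C i)]
    (hfin : {i : ℤ | Nontrivial (C i)}.Finite)
    (D : ∀ i, C i →ₗ[ℂ] C (i + 1))
    (hexact : ∀ i, LinearMap.ker (D (i + 1)) = LinearMap.range (D i))
    (k a : ℤ → ℕ) (ha : ∀ i, 0 < a i)
    (κ : ℕ) (hκ : ∀ i, k i * a i = κ)
    (N : ℤ → ℤ) (hN : ∀ i, N (i + 1) - N i = (k i : ℤ)) :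
    (∏ᶠ i : ℤ,
        LinearMap.det
            (((D i).comp (LinearMap.adjoint (D i))) ^ a i +
              ((LinearMap.adjoint (D (i + 1))).comp (D (i + 1))) ^ a (i + 1)) ^
          ((((i + 1).negOnePow : ℤˣ) : ℤ) * N (i + 1))) =
      (∏ᶠ i : ℤ,
          LinearMap.det
              (((LinearMap.adjoint (D i)).comp (D i)).restrict
                (p := LinearMap.range (LinearMap.adjoint (D i)))
                (q := LinearMap.range (LinearMap.adjoint (D i)))
                (fun x _ => LinearMap.mem_range.mpr ⟨D i x, rfl⟩)) ^
            (((i.negOnePow : ℤˣ) : ℤ))) ^ (-(κ : ℤ)) ∧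
      ∃ r : ℝ, 0 < r ∧
        (∏ᶠ i : ℤ,
            LinearMap.det
                (((D i).comp (LinearMap.adjoint (D i))) ^ a i +
                  ((LinearMap.adjoint (D (i + 1))).comp (D (i + 1))) ^ a (i + 1)) ^
              ((((i + 1).negOnePow : ℤˣ) : ℤ) * N (i + 1))) = (r : ℂ) := by
  set t : ℤ → ℂ := fun i => LinearMap.det
    (((LinearMap.adjoint (D i)).comp (D i)).restrict
      (p := LinearMap.range (LinearMap.adjoint (D i)))
      (q := LinearMap.range (LinearMap.adjoint (D i)))
      (fun x _ => LinearMap.mem_range.mpr ⟨D i x, rfl⟩))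
  have ht_pos : ∀ i, 0 < t i := fun i => det_restrict_adjoint_comp_self_pos (D i) _
  have ht_fin : HasFiniteMulSupport t := hfin.subset fun i hi => by
    by_contra h
    have : Subsingleton (C i) := not_nontrivial_iff_subsingleton.mp h
    exact hi (det_eq_one_of_subsingleton _)
  have hΔ : ∀ i, LinearMap.det (((D i).comp (LinearMap.adjoint (D i))) ^ a i +
      ((LinearMap.adjoint (D (i + 1))).comp (D (i + 1))) ^ a (i + 1)) =
      t i ^ a i * t (i + 1) ^ a (i + 1) := fun i =>
    det_self_comp_adjoint_pow_add_adjoint_comp_self_pow (D i) (D (i + 1)) (hexact i)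
      (ha i).ne' (ha (i + 1)).ne' _ _
  simp only [hΔ, finprod_zpow_telescope (fun i => (ht_pos i).ne') ht_fin hκ hN]
  have hpos : 0 < (∏ᶠ i : ℤ, t i ^ ((i.negOnePow : ℤˣ) : ℤ)) ^ (-(κ : ℤ)) :=
    zpow_pos (finprod_induction (0 < ·) one_pos (fun _ _ => mul_pos)
      fun i => zpow_pos (ht_pos i) _) _
  obtain ⟨r, hr, hr_eq⟩ := RCLike.pos_iff_exists_ofReal.mp hpos
  exact ⟨rfl, r, hr, hr_eq.symm⟩

/-- Let `(C, D)` be a finite acyclic complex of finite-dimensional complex inner product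
spaces, indexed so that `D i : C i → C (i+1)`; writing `q = i + 1`, the Rumin–Seshadri
operator on `C q` is `Δ_q = (D_{q−1} D_{q−1}^*)^{a_{q−1}} + (D_q^* D_q)^{a_q}`, and
`L^q = range(D_q^*)`.  Fixing integers `N_q` with `N_{q+1} − N_q = k_q`, the telescoping
identity
`∏_q det(Δ_q)^{(−1)^q N_q} = (∏_q det(D_q^* D_q | L^q)^{(−1)^q})^{−κ}`
holds, and both sides are positive real numbers. -/
theorem stmt19
    (C : ℤ → Type)
    [∀ i, NormedAddCommGroup (C i)] [∀ i, InnerProductSpace ℂ (C i)]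
    [∀ i, FiniteDimensional ℂ (C i)]
    (hfin : {i : ℤ | Nontrivial (C i)}.Finite)
    (D : ∀ i, C i →ₗ[ℂ] C (i + 1))
    (hcomp : ∀ i, (D (i + 1)).comp (D i) = 0)
    (hexact : ∀ i, LinearMap.ker (D (i + 1)) = LinearMap.range (D i))
    (k a : ℤ → ℕ) (hk : ∀ i, 0 < k i) (ha : ∀ i, 0 < a i)
    (κ : ℕ) (hκ : ∀ i, k i * a i = κ)
    (N : ℤ → ℤ) (hN : ∀ i, N (i + 1) - N i = (k i : ℤ)) :
    (∏ᶠ i : ℤ,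
        LinearMap.det
            (((D i).comp (LinearMap.adjoint (D i))) ^ a i +
              ((LinearMap.adjoint (D (i + 1))).comp (D (i + 1))) ^ a (i + 1)) ^
          ((((i + 1).negOnePow : ℤˣ) : ℤ) * N (i + 1))) =
      (∏ᶠ i : ℤ,
          LinearMap.det
              (((LinearMap.adjoint (D i)).comp (D i)).restrict
                (p := LinearMap.range (LinearMap.adjoint (D i)))
                (q := LinearMap.range (LinearMap.adjoint (D i)))
                (fun x _ => LinearMap.mem_range.mpr ⟨D i x, rfl⟩)) ^
            (((i.negOnePow : ℤˣ) : ℤ))) ^ (-(κ : ℤ)) ∧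
      ∃ r : ℝ, 0 < r ∧
        (∏ᶠ i : ℤ,
            LinearMap.det
                (((D i).comp (LinearMap.adjoint (D i))) ^ a i +
                  ((LinearMap.adjoint (D (i + 1))).comp (D (i + 1))) ^ a (i + 1)) ^
              ((((i + 1).negOnePow : ℤˣ) : ℤ) * N (i + 1))) = (r : ℂ) :=
  stmt19_general C hfin D hexact k a ha κ hκ N hN
end
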